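/- arXiv:1110.0870 — 7 statements merged into one kernel-verified Lean document; each statement's English description precedes it below -/
import Mathlib

section
/- Let h be a differentiable solution on (a,b) of the Riccati equation h'(x) = d(x) - (B(x) - A(x))h(x) - e(x)h(x)², with d, e continuous and positive on (a,b). Define λ⁺(x) = (-(B(x)-A(x)) + sqrt((B(x)-A(x))² + 4 d(x) e(x)))/(2 e(x)), the positive characteristic root. Assume λ⁺ is strictly increasing on (a,b), h(a⁺) > 0 and h'(a⁺) > 0. Then h(x) < λ⁺(x) for all x in (a,b). -/
open Set Filter

/-!
Near `a` the right-hand side of the equation is positive, which puts `h` below `λ⁺` at some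
`x₁`. Given `x₀ > x₁`, the constant `k = λ⁺(x₀)` lies above `λ⁺` on `(x₁, x₀)` because `λ⁺`
increases, so the right-hand side evaluated at `k` is negative there: `k` is a strict
supersolution. For `g = h - k` the equation reads `g' = (right-hand side at k) + m g` with `m`
continuous, and the integrating factor `exp (-∫ m)` turns `g' < m g` into the strict decrease of
`g · exp (-∫ m)`; hence `g (x₀) < 0` follows from `g (x₁) < 0`.
-/

def riccatiRhs (d p e y : ℝ) : ℝ := d - p * y - e * y ^ 2

noncomputable def charRoot (d p e : ℝ) : ℝ := (-p + √(p ^ 2 + 4 * d * e)) / (2 * e)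

theorem four_mul_mul_riccatiRhs (d p e y : ℝ) :
    4 * e * riccatiRhs d p e y = (p ^ 2 + 4 * d * e) - (2 * e * y + p) ^ 2 := by
  unfold riccatiRhs; ring

theorem lt_charRoot_of_riccatiRhs_pos {d p e y : ℝ} (he : 0 < e) (hy : 0 < riccatiRhs d p e y) :
    y < charRoot d p e := by
  have hdisc : (2 * e * y + p) ^ 2 < p ^ 2 + 4 * d * e := by
    nlinarith [four_mul_mul_riccatiRhs d p e y]
  have hsqrt : 2 * e * y + p < √(p ^ 2 + 4 * d * e) :=
    (le_abs_self _).trans_lt (Real.lt_sqrt (abs_nonneg _) |>.2 (by rwa [sq_abs]))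
  rw [charRoot, lt_div_iff₀ (by positivity)]
  linarith

theorem riccatiRhs_neg_of_charRoot_lt {d p e y : ℝ} (he : 0 < e) (hy : charRoot d p e < y) :
    riccatiRhs d p e y < 0 := by
  rw [charRoot, div_lt_iff₀ (by positivity)] at hy
  have hpos : 0 < 2 * e * y + p := by linarith [Real.sqrt_nonneg (p ^ 2 + 4 * d * e)]
  have hdisc : p ^ 2 + 4 * d * e < (2 * e * y + p) ^ 2 :=
    (Real.sqrt_lt' hpos).1 (by linarith)
  nlinarith [four_mul_mul_riccatiRhs d p e y]

theorem riccatiRhs_eq_add_mul_sub (d p e y k : ℝ) :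
    riccatiRhs d p e y = riccatiRhs d p e k + (-p - e * (y + k)) * (y - k) := by
  unfold riccatiRhs; ring

theorem neg_of_nonpos_of_hasDerivAt_lt_mul {g g' m : ℝ → ℝ} {s t : ℝ} (hst : s < t)
    (hg : ContinuousOn g (Icc s t)) (hm : ContinuousOn m (Icc s t))
    (hderiv : ∀ x ∈ Ioo s t, HasDerivAt g (g' x) x)
    (hlt : ∀ x ∈ Ioo s t, g' x < m x * g x) (hs : g s ≤ 0) : g t < 0 := by
  set M : ℝ → ℝ := fun x => ∫ y in s..x, m y
  have hM : ContinuousOn M (Icc s t) := by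
    have := intervalIntegral.continuousOn_primitive_interval (μ := MeasureTheory.volume)
      (a := s) (b := t) (by rw [uIcc_of_le hst.le]; exact hm.integrableOn_Icc)
    rwa [uIcc_of_le hst.le] at this
  have hM' : ∀ x ∈ Ioo s t, HasDerivAt M (m x) x := fun x hx =>
    intervalIntegral.integral_hasDerivAt_right
      ((hm.mono (Icc_subset_Icc_right hx.2.le)).intervalIntegrable_of_Icc hx.1.le)
      ((hm.mono Ioo_subset_Icc_self).stronglyMeasurableAtFilter isOpen_Ioo x hx)
      (hm.continuousAt (Icc_mem_nhds hx.1 hx.2))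
  have hanti : StrictAntiOn (fun x => g x * Real.exp (-M x)) (Icc s t) := by
    refine strictAntiOn_of_deriv_neg (convex_Icc s t)
      (hg.mul (hM.neg.rexp)) fun x hx => ?_
    rw [interior_Icc] at hx
    have hd : HasDerivAt (fun y => g y * Real.exp (-M y))
        (g' x * Real.exp (-M x) + g x * (Real.exp (-M x) * -m x)) x :=
      (hderiv x hx).mul (hM' x hx).neg.exp
    rw [hd.deriv]
    nlinarith [hlt x hx, Real.exp_pos (-M x)]
  have hts : g t * Real.exp (-M t) < g s * Real.exp (-M s) :=
    hanti (left_mem_Icc.2 hst.le) (right_mem_Icc.2 hst.le) hst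
  nlinarith [Real.exp_pos (-M s), Real.exp_pos (-M t)]

theorem lt_of_riccati_supersolution {y d p e : ℝ → ℝ} {k s t : ℝ} (hst : s < t)
    (hp : ContinuousOn p (Icc s t)) (he : ContinuousOn e (Icc s t))
    (hy : ∀ x ∈ Icc s t, HasDerivAt y (riccatiRhs (d x) (p x) (e x) (y x)) x)
    (hk : ∀ x ∈ Ioo s t, riccatiRhs (d x) (p x) (e x) k < 0) (hs : y s ≤ k) : y t < k := by
  have hyc : ContinuousOn y (Icc s t) := fun x hx => (hy x hx).continuousAt.continuousWithinAt
  refine sub_neg.1 <| neg_of_nonpos_of_hasDerivAt_lt_mul (g := fun x => y x - k)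
    (m := fun x => -p x - e x * (y x + k)) hst (hyc.sub continuousOn_const)
    (hp.neg.sub (he.mul (hyc.add continuousOn_const)))
    (fun x hx => (hy x (Ioo_subset_Icc_self hx)).sub_const k) (fun x hx => ?_) (sub_nonpos.2 hs)
  rw [riccatiRhs_eq_add_mul_sub _ _ _ _ k]
  linarith [hk x hx]

theorem riccati_below_char_root_general (a b : ℝ) (h d e A B : ℝ → ℝ) (L' : ℝ)
    (lam : ℝ → ℝ)
    (hlam : ∀ x ∈ Ioo a b,
      lam x = (-(B x - A x) + Real.sqrt ((B x - A x) ^ 2 + 4 * d x * e x)) /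
        (2 * e x))
    (hA : ContinuousOn A (Ioo a b)) (hB : ContinuousOn B (Ioo a b))
    (he : ContinuousOn e (Ioo a b))
    (hepos : ∀ x ∈ Ioo a b, 0 < e x)
    (hric : ∀ x ∈ Ioo a b,
      HasDerivAt h (d x - (B x - A x) * h x - e x * (h x) ^ 2) x)
    (hmono : StrictMonoOn lam (Ioo a b))
    (hlim' : Tendsto (fun x => d x - (B x - A x) * h x - e x * (h x) ^ 2)
      (nhdsWithin a (Ioi a)) (nhds L')) (hL' : 0 < L') :
    ∀ x ∈ Ioo a b, h x < lam x := by
  intro x₀ hx₀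
  have hroot : ∀ x ∈ Ioo a b, lam x = charRoot (d x) (B x - A x) (e x) := hlam
  obtain ⟨x₁, hrhs₁, hax₁, hx₁x₀⟩ :=
    ((hlim'.eventually (eventually_gt_nhds hL')).and (Ioo_mem_nhdsGT hx₀.1)).exists
  have hsub : Icc x₁ x₀ ⊆ Ioo a b := Icc_subset_Ioo hax₁ hx₀.2
  have hx₁ : x₁ ∈ Ioo a b := hsub (left_mem_Icc.2 hx₁x₀.le)
  refine lt_of_riccati_supersolution hx₁x₀ ((hB.sub hA).mono hsub)
    (he.mono hsub) (fun x hx => hric x (hsub hx)) (fun x hx => ?_) ?_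
  · have hxab := hsub (Ioo_subset_Icc_self hx)
    exact riccatiRhs_neg_of_charRoot_lt (hepos x hxab) (hroot x hxab ▸ hmono hxab hx₀ hx.2)
  · have hlt₁ := lt_charRoot_of_riccatiRhs_pos (hepos x₁ hx₁) hrhs₁
    exact ((hroot x₁ hx₁).symm ▸ hlt₁).trans (hmono hx₁ hx₀ hx₁x₀) |>.le

/-- If `h` solves the Riccati equation
`h' = d - (B - A) h - e h²` on `(a,b)` with `d, e` continuous and positive,
the positive characteristic root `λ⁺` is strictly increasing on `(a,b)`,
and `h(a⁺) > 0`, `h'(a⁺) > 0`, then `h(x) < λ⁺(x)` on `(a,b)`. -/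
theorem riccati_below_char_root (a b : ℝ) (h d e A B : ℝ → ℝ) (L L' : ℝ)
    (lam : ℝ → ℝ)
    (hlam : ∀ x ∈ Ioo a b,
      lam x = (-(B x - A x) + Real.sqrt ((B x - A x) ^ 2 + 4 * d x * e x)) /
        (2 * e x))
    (hA : ContinuousOn A (Ioo a b)) (hB : ContinuousOn B (Ioo a b))
    (hd : ContinuousOn d (Ioo a b)) (he : ContinuousOn e (Ioo a b))
    (hdpos : ∀ x ∈ Ioo a b, 0 < d x) (hepos : ∀ x ∈ Ioo a b, 0 < e x)
    (hric : ∀ x ∈ Ioo a b,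
      HasDerivAt h (d x - (B x - A x) * h x - e x * (h x) ^ 2) x)
    (hmono : StrictMonoOn lam (Ioo a b))
    (hlim : Tendsto h (nhdsWithin a (Ioi a)) (nhds L)) (hL : 0 < L)
    (hlim' : Tendsto (fun x => d x - (B x - A x) * h x - e x * (h x) ^ 2)
      (nhdsWithin a (Ioi a)) (nhds L')) (hL' : 0 < L') :
    ∀ x ∈ Ioo a b, h x < lam x :=
  riccati_below_char_root_general a b h d e A B L' lam hlam hA hB he hepos hric hmono hlim' hL'
end

section
/- Let h be a differentiable solution on (a,b) of the Riccati equation h'(x) = d(x) - (B(x) - A(x))h(x) - e(x)h(x)², with d, e continuous and positive, and let λ⁺(x) be the positive characteristic root. Assume λ⁺ is strictly increasing on (a,b), h(a⁺) > 0 and h'(a⁺) < 0. Then either h attains a local minimum at some point x_e in (a,b), or h(x) > λ⁺(x) for all x in (a,b). -/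
open Set Filter

/-- If `h` solves the Riccati equation
`h' = d - (B - A) h - e h²` on `(a,b)` with `d, e` continuous and positive,
the positive characteristic root `λ⁺` is strictly increasing on `(a,b)`,
and `h(a⁺) > 0`, `h'(a⁺) < 0`, then either `h` attains a local minimum at
some point of `(a,b)`, or `h(x) > λ⁺(x)` on all of `(a,b)`. -/
theorem riccati_min_or_above_char_root (a b : ℝ) (h d e A B : ℝ → ℝ)
    (L L' : ℝ) (lam : ℝ → ℝ)
    (hlam : ∀ x ∈ Ioo a b,
      lam x = (-(B x - A x) + Real.sqrt ((B x - A x) ^ 2 + 4 * d x * e x)) /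
        (2 * e x))
    (hA : ContinuousOn A (Ioo a b)) (hB : ContinuousOn B (Ioo a b))
    (hd : ContinuousOn d (Ioo a b)) (he : ContinuousOn e (Ioo a b))
    (hdpos : ∀ x ∈ Ioo a b, 0 < d x) (hepos : ∀ x ∈ Ioo a b, 0 < e x)
    (hric : ∀ x ∈ Ioo a b,
      HasDerivAt h (d x - (B x - A x) * h x - e x * (h x) ^ 2) x)
    (hmono : StrictMonoOn lam (Ioo a b))
    (hlim : Tendsto h (nhdsWithin a (Ioi a)) (nhds L)) (hL : 0 < L)
    (hlim' : Tendsto (fun x => d x - (B x - A x) * h x - e x * (h x) ^ 2)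
      (nhdsWithin a (Ioi a)) (nhds L')) (hL' : L' < 0) :
    (∃ xe ∈ Ioo a b, IsLocalMin h xe) ∨ ∀ x ∈ Ioo a b, lam x < h x := by
  by_cases hall : ∀ x ∈ Ioo a b, lam x < h x
  · exact Or.inr hall
  push_neg at hall
  obtain ⟨x0, hx0, hx0le⟩ := hall
  left
  have hab : a < b := hx0.1.trans hx0.2
  -- continuity of h on (a,b)
  have hcont : ContinuousOn h (Ioo a b) := fun x hx =>
    ((hric x hx).continuousAt).continuousWithinAt
  -- continuity of lam on (a,b)
  have hformcont : ContinuousOn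
      (fun x => (-(B x - A x) + Real.sqrt ((B x - A x) ^ 2 + 4 * d x * e x)) /
        (2 * e x)) (Ioo a b) := by
    apply ContinuousOn.div
    · exact ((hB.sub hA).neg).add
        (Real.continuous_sqrt.comp_continuousOn
          (((hB.sub hA).pow 2).add ((continuousOn_const.mul hd).mul he)))
    · exact continuousOn_const.mul he
    · intro x hx
      exact mul_ne_zero two_ne_zero (ne_of_gt (hepos x hx))
  have hlamcont : ContinuousOn lam (Ioo a b) := hformcont.congr hlam
  -- basic sqrt facts at each point
  have hbase : ∀ x ∈ Ioo a b,
      0 ≤ Real.sqrt ((B x - A x) ^ 2 + 4 * d x * e x) ∧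
      (Real.sqrt ((B x - A x) ^ 2 + 4 * d x * e x)) ^ 2
        = (B x - A x) ^ 2 + 4 * d x * e x ∧
      B x - A x < Real.sqrt ((B x - A x) ^ 2 + 4 * d x * e x) ∧
      -(B x - A x) < Real.sqrt ((B x - A x) ^ 2 + 4 * d x * e x) ∧
      lam x * (2 * e x) = -(B x - A x) + Real.sqrt ((B x - A x) ^ 2 + 4 * d x * e x) := by
    intro x hx
    have hdx := hdpos x hx
    have hex := hepos x hx
    have hrad : (0:ℝ) ≤ (B x - A x) ^ 2 + 4 * d x * e x := by
      nlinarith [sq_nonneg (B x - A x)]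
    have hs0 : 0 ≤ Real.sqrt ((B x - A x) ^ 2 + 4 * d x * e x) := Real.sqrt_nonneg _
    have hs2 : (Real.sqrt ((B x - A x) ^ 2 + 4 * d x * e x)) ^ 2
        = (B x - A x) ^ 2 + 4 * d x * e x := Real.sq_sqrt hrad
    refine ⟨hs0, hs2, ?_, ?_, ?_⟩
    · nlinarith [hs2, hs0, mul_pos hdx hex]
    · nlinarith [hs2, hs0, mul_pos hdx hex]
    · rw [hlam x hx]
      field_simp
  -- positivity of lam
  have hlampos : ∀ x ∈ Ioo a b, 0 < lam x := by
    intro x hx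
    obtain ⟨hs0, hs2, hus, hus', hleq⟩ := hbase x hx
    have hex := hepos x hx
    nlinarith [hleq, hus]
  -- the quadratic is nonnegative on [0, lam x]
  have hQnonneg : ∀ x ∈ Ioo a b, ∀ y : ℝ, 0 ≤ y → y ≤ lam x →
      0 ≤ d x - (B x - A x) * y - e x * y ^ 2 := by
    intro x hx y hy0 hyl
    obtain ⟨hs0, hs2, hus, hus', hleq⟩ := hbase x hx
    have hex := hepos x hx
    set u := B x - A x
    set s := Real.sqrt (u ^ 2 + 4 * d x * e x)
    have hid : (d x - u * y - e x * y ^ 2) * (4 * e x) =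
        (lam x * (2 * e x) - 2 * e x * y) * (2 * e x * y + (u + s)) := by
      rw [hleq]; linear_combination -hs2
    have h1 : 0 ≤ lam x * (2 * e x) - 2 * e x * y := by nlinarith [hyl, hex]
    have h2 : 0 ≤ 2 * e x * y + (u + s) := by nlinarith [hy0, hex, hus']
    nlinarith [hid, mul_nonneg h1 h2, hex]
  -- the quadratic is negative above lam x
  have hQneg : ∀ x ∈ Ioo a b, ∀ y : ℝ, lam x < y →
      d x - (B x - A x) * y - e x * y ^ 2 < 0 := by
    intro x hx y hyl
    obtain ⟨hs0, hs2, hus, hus', hleq⟩ := hbase x hx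
    have hex := hepos x hx
    have hlp := hlampos x hx
    set u := B x - A x
    set s := Real.sqrt (u ^ 2 + 4 * d x * e x)
    have hid : (d x - u * y - e x * y ^ 2) * (4 * e x) =
        (lam x * (2 * e x) - 2 * e x * y) * (2 * e x * y + (u + s)) := by
      rw [hleq]; linear_combination -hs2
    have h1 : lam x * (2 * e x) - 2 * e x * y < 0 := by nlinarith [hyl, hex]
    have h2 : 0 < 2 * e x * y + (u + s) := by nlinarith [hex, hus', hlp, hyl]
    nlinarith [hid, mul_neg_of_neg_of_pos h1 h2, hex]
  -- mean value theorem helper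
  have slopeLemma : ∀ p q : ℝ, p ∈ Ioo a b → q ∈ Ioo a b → p < q →
      ∃ c ∈ Ioo p q, d c - (B c - A c) * h c - e c * (h c) ^ 2 =
        (h q - h p) / (q - p) := by
    intro p q hp hq hpq
    have hsub : Icc p q ⊆ Ioo a b := fun z hz => ⟨hp.1.trans_le hz.1, hz.2.trans_lt hq.2⟩
    exact exists_hasDerivAt_eq_slope h _ hpq (hcont.mono hsub)
      (fun z hz => hric z (hsub ⟨hz.1.le, hz.2.le⟩))
  -- if h > lam on (p,q) then h is decreasing across [p,q]
  have noInc : ∀ p q : ℝ, p ∈ Ioo a b → q ∈ Ioo a b → p < q →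
      (∀ z ∈ Ioo p q, lam z < h z) → h q ≤ h p := by
    intro p q hp hq hpq habove
    by_contra hlt
    push_neg at hlt
    obtain ⟨c, hc, hceq⟩ := slopeLemma p q hp hq hpq
    have hcmem : c ∈ Ioo a b := ⟨hp.1.trans hc.1, hc.2.trans hq.2⟩
    have h1 := hQneg c hcmem (h c) (habove c hc)
    have h2 : 0 < (h q - h p) / (q - p) := div_pos (by linarith) (by linarith [hpq])
    rw [hceq] at h1
    linarith
  -- if 0 ≤ h ≤ lam on (p,q) then h is increasing across [p,q]
  have noDec : ∀ p q : ℝ, p ∈ Ioo a b → q ∈ Ioo a b → p < q →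
      (∀ z ∈ Ioo p q, 0 ≤ h z ∧ h z ≤ lam z) → h p ≤ h q := by
    intro p q hp hq hpq hbetween
    by_contra hlt
    push_neg at hlt
    obtain ⟨c, hc, hceq⟩ := slopeLemma p q hp hq hpq
    have hcmem : c ∈ Ioo a b := ⟨hp.1.trans hc.1, hc.2.trans hq.2⟩
    obtain ⟨hc0, hcl⟩ := hbetween c hc
    have h1 := hQnonneg c hcmem (h c) hc0 hcl
    have h2 : (h q - h p) / (q - p) < 0 :=
      div_neg_of_neg_of_pos (by linarith) (by linarith [hpq])
    rw [hceq] at h1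
    linarith
  -- near a, h is positive and h' is negative, hence h > lam
  have hev : ∀ᶠ x in nhdsWithin a (Ioi a),
      0 < h x ∧ (d x - (B x - A x) * h x - e x * (h x) ^ 2) < 0 ∧ x ∈ Ioo a b := by
    filter_upwards [hlim.eventually (eventually_gt_nhds hL),
      hlim'.eventually (eventually_lt_nhds hL'),
      Ioo_mem_nhdsGT_of_mem (left_mem_Ico.2 hab)] with x h1 h2 h3
    exact ⟨h1, h2, h3⟩
  obtain ⟨c0, hc0gt, hsub0⟩ := mem_nhdsGT_iff_exists_Ioc_subset.1 hev
  have hc0mem : c0 ∈ Ioo a b := (hsub0 ⟨hc0gt, le_refl c0⟩).2.2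
  have hIoc : ∀ z ∈ Ioc a c0, lam z < h z := by
    intro z hz
    obtain ⟨h1, h2, h3⟩ := hsub0 hz
    by_contra hle
    push_neg at hle
    exact absurd (hQnonneg z h3 (h z) h1.le hle) (not_le.2 h2)
  have hc0x0 : c0 < x0 := by
    by_contra hle
    push_neg at hle
    exact absurd hx0le (not_le.2 (hIoc x0 ⟨hx0.1, hle⟩))
  have hIccsub : Icc c0 x0 ⊆ Ioo a b := fun z hz =>
    ⟨hc0mem.1.trans_le hz.1, hz.2.trans_lt hx0.2⟩
  -- the first point where h ≤ lam
  set S : Set ℝ := Icc c0 x0 ∩ (fun z => h z - lam z) ⁻¹' (Iic 0) with hS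
  have hSclosed : IsClosed S :=
    ((hcont.mono hIccsub).sub (hlamcont.mono hIccsub)).preimage_isClosed_of_isClosed
      isClosed_Icc isClosed_Iic
  have hSne : S.Nonempty := ⟨x0, ⟨⟨hc0x0.le, le_refl x0⟩, by simp [hx0le, sub_nonpos]⟩⟩
  have hSbdd : BddBelow S := ⟨c0, fun z hz => hz.1.1⟩
  set x1 : ℝ := sInf S with hx1def
  have hx1S : x1 ∈ S := hSclosed.csInf_mem hSne hSbdd
  have hx1le : h x1 ≤ lam x1 := by
    have := hx1S.2
    simp only [mem_preimage, mem_Iic] at this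
    linarith
  have hc0x1 : c0 < x1 := by
    rcases eq_or_lt_of_le hx1S.1.1 with hEq | hlt
    · exact absurd hx1le (not_le.2 (by rw [← hEq]; exact hIoc c0 ⟨hc0mem.1, le_refl c0⟩))
    · exact hlt
  have hx1mem : x1 ∈ Ioo a b := hIccsub hx1S.1
  have habove : ∀ z ∈ Ioo a x1, lam z < h z := by
    intro z hz
    rcases le_or_gt z c0 with hzc | hzc
    · exact hIoc z ⟨hz.1, hzc⟩
    · by_contra hle
      push_neg at hle
      have hzS : z ∈ S := ⟨⟨hzc.le, hz.2.le.trans hx1S.1.2⟩,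
        by simp [mem_preimage, mem_Iic, sub_nonpos, hle]⟩
      exact absurd (csInf_le hSbdd hzS) (not_le.2 hz.2)
  -- h x1 = lam x1
  have hx1ge : lam x1 ≤ h x1 := by
    have hnb : (nhdsWithin x1 (Ioo c0 x1)).NeBot := by
      apply mem_closure_iff_nhdsWithin_neBot.1
      rw [closure_Ioo hc0x1.ne]
      exact right_mem_Icc.2 hc0x1.le
    have ht : Tendsto (fun z => h z - lam z) (nhdsWithin x1 (Ioo c0 x1))
        (nhds (h x1 - lam x1)) :=
      (((hcont.sub hlamcont) x1 hx1mem).mono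
        (fun z hz => ⟨hc0mem.1.trans hz.1, hz.2.trans_le (hx1mem.2.le)⟩ :
          Ioo c0 x1 ⊆ Ioo a b)).tendsto
    have hge : (0:ℝ) ≤ h x1 - lam x1 := by
      refine ge_of_tendsto ht ?_
      filter_upwards [eventually_mem_nhdsWithin] with z hz
      have : lam z < h z := habove z ⟨hc0mem.1.trans hz.1, hz.2⟩
      linarith
    linarith
  have hx1eq : h x1 = lam x1 := le_antisymm hx1le hx1ge
  have hmpos : 0 < h x1 := hx1eq ▸ hlampos x1 hx1mem
  -- x1 is a global minimum on (a,b)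
  refine ⟨x1, hx1mem, ?_⟩
  have hmin : ∀ y ∈ Ioo a b, h x1 ≤ h y := by
    intro y hy
    rcases lt_trichotomy y x1 with hlt | hEq | hgt
    · exact noInc y x1 hy hx1mem hlt
        (fun z hz => habove z ⟨hy.1.trans hz.1, hz.2⟩)
    · rw [hEq]
    · -- y > x1 : show h y ≥ lam x1 = h x1
      by_contra hconI
      push_neg at hconI
      have hIccsub2 : Icc x1 y ⊆ Ioo a b := fun z hz =>
        ⟨hx1mem.1.trans_le hz.1, hz.2.trans_lt hy.2⟩
      -- last point u where h ≥ lam x1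
      set U : Set ℝ := Icc x1 y ∩ h ⁻¹' (Ici (lam x1)) with hU
      have hUclosed : IsClosed U :=
        (hcont.mono hIccsub2).preimage_isClosed_of_isClosed isClosed_Icc isClosed_Ici
      have hUne : U.Nonempty := ⟨x1, ⟨⟨le_refl x1, hgt.le⟩, by
        simp [mem_preimage, mem_Ici, hx1eq.ge, hx1eq.le]⟩⟩
      have hUbdd : BddAbove U := ⟨y, fun z hz => hz.1.2⟩
      set u : ℝ := sSup U with hudef
      have huU : u ∈ U := hUclosed.csSup_mem hUne hUbdd
      have hulam : lam x1 ≤ h u := huU.2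
      have huy : u < y := by
        rcases eq_or_lt_of_le huU.1.2 with hEq2 | hlt2
        · exact absurd (hEq2 ▸ hulam) (not_le.2 (hx1eq ▸ hconI))
        · exact hlt2
      have humem : u ∈ Ioo a b := hIccsub2 huU.1
      have hbelow : ∀ z ∈ Ioo u y, h z < lam x1 := by
        intro z hz
        by_contra hle
        push_neg at hle
        have hzU : z ∈ U := ⟨⟨huU.1.1.trans hz.1.le, hz.2.le⟩, hle⟩
        exact absurd (le_csSup hUbdd hzU) (not_le.2 hz.1)
      have hlamgt : ∀ z ∈ Ioo u y, lam x1 < lam z := by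
        intro z hz
        have hzmem : z ∈ Ioo a b := ⟨humem.1.trans hz.1, hz.2.trans hy.2⟩
        exact hmono hx1mem hzmem (lt_of_le_of_lt huU.1.1 hz.1)
      -- h stays nonnegative on (u, y)
      have hnonneg : ∀ z ∈ Ioo u y, 0 ≤ h z := by
        by_contra hcon2
        push_neg at hcon2
        obtain ⟨w, hw, hwneg⟩ := hcon2
        set T : Set ℝ := Icc u w ∩ h ⁻¹' (Iic 0) with hT
        have hIccsub3 : Icc u w ⊆ Ioo a b := fun z hz =>
          ⟨humem.1.trans_le hz.1, (hz.2.trans_lt hw.2).trans hy.2⟩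
        have hTclosed : IsClosed T :=
          (hcont.mono hIccsub3).preimage_isClosed_of_isClosed isClosed_Icc isClosed_Iic
        have hTne : T.Nonempty := ⟨w, ⟨⟨hw.1.le, le_refl w⟩, hwneg.le⟩⟩
        have hTbdd : BddBelow T := ⟨u, fun z hz => hz.1.1⟩
        set w1 : ℝ := sInf T with hw1def
        have hw1T : w1 ∈ T := hTclosed.csInf_mem hTne hTbdd
        have hw1neg : h w1 ≤ 0 := hw1T.2
        have huw1 : u < w1 := by
          rcases eq_or_lt_of_le hw1T.1.1 with hEq3 | hlt3
          · exact absurd hw1neg (not_le.2 (by rw [← hEq3]; linarith [hlampos x1 hx1mem, hx1eq ▸ hulam]))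
          · exact hlt3
        have hw1mem : w1 ∈ Ioo a b := hIccsub3 hw1T.1
        have hcond : ∀ z ∈ Ioo u w1, 0 ≤ h z ∧ h z ≤ lam z := by
          intro z hz
          have hzIoo : z ∈ Ioo u y := ⟨hz.1, (hz.2.trans_le hw1T.1.2).trans hw.2⟩
          constructor
          · by_contra hneg
            push_neg at hneg
            have hzT : z ∈ T := ⟨⟨hz.1.le, hz.2.le.trans hw1T.1.2⟩, hneg.le⟩
            exact absurd (csInf_le hTbdd hzT) (not_le.2 hz.2)
          · exact ((hbelow z hzIoo).trans (hlamgt z hzIoo)).le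
        have := noDec u w1 humem hw1mem huw1 hcond
        have hlamx1pos : 0 < lam x1 := hlampos x1 hx1mem
        linarith [hulam]
      -- conclude: h cannot decrease from u to y
      have := noDec u y humem hy huy
        (fun z hz => ⟨hnonneg z hz, ((hbelow z hz).trans (hlamgt z hz)).le⟩)
      rw [hx1eq] at hconI
      linarith [hulam]
  exact Filter.eventually_of_mem (isOpen_Ioo.mem_nhds hx1mem) hmin
end

section
/- For all real n > 1/2 and all x ≥ 0, the ratio of parabolic cylinder functions satisfies 2/(x + sqrt(4n + 2 + x²)) < U(n,x)/U(n-1,x) < 2/(x + sqrt(4n - 2 + x²)). Moreover the lower bound also holds for n ∈ (-1/2, 1/2), and equals the ratio exactly when n = -1/2. -/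
/-!
The ladder operators `d/dx ± x/2` map solutions of Weber's equation `y'' = (x²/4 + a) y` to
solutions with parameter `a ± 1`; applied to `U(a, ·)` they give recessive solutions, which a
Wronskian argument identifies with multiples of `U(a ± 1, ·)`, the constants being fixed by the
recurrence. This yields `U'(a+1,x) = x/2 U(a+1,x) - U(a,x)` and
`U'(a,x) = -x/2 U(a,x) - (a+1/2) U(a+1,x)`, so `r = U(a+1,·)/U(a,·)` solves the Riccati
equation `r' = (a+1/2) r² + x r - 1` and tends to `0`. The positive zero
`ρ(x) = 2/(x + √(x² + 4a + 2))` of the right-hand side decreases, so once `r ≥ ρ` at some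
`x ≥ 0`, `r` stays above `ρ`, hence is nondecreasing, contradicting `r → 0`. This is the upper
bound; the lower bound follows from it through the recurrence, which at `a = -1/2` reads
`U(-3/2,x) = x U(-1/2,x)`.
-/

open Filter

/-- The parabolic cylinder function `U(a,x)` (DLMF §12), characterized as a
family `U` (with `x`-derivative `U'`) of solutions of `y'' = (x²/4 + a) y`
that is recessive as `x → +∞`, positive for `a > -1/2`, and satisfies the
recurrence `U(a-1,x) = x U(a,x) + (a + 1/2) U(a+1,x)`. -/
structure IsParabolicCylinderU (U U' : ℝ → ℝ → ℝ) : Prop where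
  hasDeriv : ∀ a x : ℝ, HasDerivAt (U a) (U' a x) x
  ode : ∀ a x : ℝ, HasDerivAt (U' a) ((x ^ 2 / 4 + a) * U a x) x
  recessive : ∀ a : ℝ, Tendsto (U a) atTop (nhds 0)
  pos : ∀ a x : ℝ, -1/2 < a → 0 < U a x
  recurrence : ∀ a x : ℝ, U (a - 1) x = x * U a x + (a + 1/2) * U (a + 1) x

open Set Topology

theorem tendsto_deriv_atTop_of_monotoneOn {f f' : ℝ → ℝ} {x₀ L : ℝ}
    (hf : ∀ x, HasDerivAt f (f' x) x) (hmono : MonotoneOn f' (Ici x₀))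
    (hlim : Tendsto f atTop (𝓝 L)) : Tendsto f' atTop (𝓝 0) := by
  set Δ : ℝ → ℝ := fun x => f (x + 1) - f x
  have hΔ : Tendsto Δ atTop (𝓝 0) := by
    simpa using (hlim.comp (tendsto_atTop_add_const_right _ 1 tendsto_id)).sub hlim
  have mvt : ∀ x, ∃ ξ ∈ Ioo x (x + 1), f' ξ = Δ x := fun x => by
    obtain ⟨ξ, hξ, h⟩ := exists_hasDerivAt_eq_slope f f' (lt_add_one x)
      (HasDerivAt.continuousOn fun t _ => hf t) fun t _ => hf t
    exact ⟨ξ, hξ, by simpa [Δ] using h⟩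
  refine tendsto_of_tendsto_of_tendsto_of_le_of_le'
    (hΔ.comp (tendsto_atTop_add_const_right _ (-1) tendsto_id)) hΔ ?_ ?_
  · filter_upwards [eventually_ge_atTop (x₀ + 1)] with x hx
    obtain ⟨ξ, ⟨hξ₁, hξ₂⟩, hξ⟩ := mvt (x + -1)
    rw [Function.comp_apply, id, ← hξ]
    exact hmono (mem_Ici.2 (by linarith)) (mem_Ici.2 (by linarith)) (by linarith)
  · filter_upwards [eventually_ge_atTop x₀] with x hx
    obtain ⟨ξ, ⟨hξ₁, _⟩, hξ⟩ := mvt x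
    rw [← hξ]
    exact hmono hx (mem_Ici.2 (by linarith)) hξ₁.le

structure SolvesLinearODE (q y y' : ℝ → ℝ) : Prop where
  hasDerivAt : ∀ x, HasDerivAt y (y' x) x
  hasDerivAt_deriv : ∀ x, HasDerivAt y' (q x * y x) x

namespace SolvesLinearODE

variable {q y y' u u' : ℝ → ℝ}

theorem exists_eq_const_mul (hy : SolvesLinearODE q y y') (hu : SolvesLinearODE q u u')
    (hu₀ : ∀ x, u x ≠ 0) (hW : Tendsto (fun x => y x * u' x - y' x * u x) atTop (𝓝 0)) :
    ∃ k, ∀ x, y x = k * u x := by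
  set W : ℝ → ℝ := fun x => y x * u' x - y' x * u x
  have hW' : ∀ x, HasDerivAt W 0 x := fun x =>
    ((hy.hasDerivAt x).mul (hu.hasDerivAt_deriv x)).sub
      ((hy.hasDerivAt_deriv x).mul (hu.hasDerivAt x)) |>.congr_deriv (by ring)
  have hW_const : ∀ x, W x = W 0 := fun x =>
    is_const_of_deriv_eq_zero (fun t => (hW' t).differentiableAt) (fun t => (hW' t).deriv) x 0
  have hW₀ : ∀ x, W x = 0 := fun x => by
    rw [hW_const x]
    exact tendsto_nhds_unique (tendsto_const_nhds.congr fun t => (hW_const t).symm) hW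
  -- the Wronskian vanishes, so `y / u` has derivative `-W / u² = 0`
  have hquot : ∀ x, HasDerivAt (fun t => y t / u t) 0 x := fun x =>
    ((hy.hasDerivAt x).div (hu.hasDerivAt x) (hu₀ x)).congr_deriv <| by
      rw [div_eq_zero_iff]; left; linear_combination -hW₀ x
  refine ⟨y 0 / u 0, fun x => ?_⟩
  have := is_const_of_deriv_eq_zero (fun t => (hquot t).differentiableAt)
    (fun t => (hquot t).deriv) x 0
  rw [← this, div_mul_cancel₀ _ (hu₀ x)]

theorem weber_ladder {a s : ℝ} (hs : s ^ 2 = 1)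
    (hu : SolvesLinearODE (fun x => x ^ 2 / 4 + a) u u') :
    SolvesLinearODE (fun x => x ^ 2 / 4 + (a + s)) (fun x => u' x + s * x / 2 * u x)
      (fun x => (x ^ 2 / 4 + a + s / 2) * u x + s * x / 2 * u' x) where
  hasDerivAt x :=
    ((hu.hasDerivAt_deriv x).add ((((hasDerivAt_id' x).const_mul s).div_const 2).mul
      (hu.hasDerivAt x))).congr_deriv (by ring)
  hasDerivAt_deriv x := by
    have hquad : HasDerivAt (fun t : ℝ => t ^ 2 / 4 + a + s / 2) (x / 2) x :=
      ((((hasDerivAt_pow 2 x).div_const 4).add_const a).add_const (s / 2)).congr_deriv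
        (by norm_num; ring)
    refine ((hquad.mul (hu.hasDerivAt x)).add ((((hasDerivAt_id' x).const_mul s).div_const 2).mul
      (hu.hasDerivAt_deriv x))).congr_deriv ?_
    linear_combination -(x / 2 * u x) * hs

end SolvesLinearODE

/-- The positive root of `c y² + x y = 1`, written so that it still makes sense at `c = 0`. -/
noncomputable def riccatiRoot (c x : ℝ) : ℝ := 2 / (x + √(x ^ 2 + 4 * c))

section riccatiRoot

variable {c : ℝ}

theorem abs_lt_sqrt_sq_add (hc : 0 < c) (x : ℝ) : |x| < √(x ^ 2 + 4 * c) := by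
  rw [← Real.sqrt_sq_eq_abs]
  exact Real.sqrt_lt_sqrt (sq_nonneg x) (by linarith)

theorem add_sqrt_sq_add_pos (hc : 0 < c) (x : ℝ) : 0 < x + √(x ^ 2 + 4 * c) := by
  linarith [neg_abs_le x, abs_lt_sqrt_sq_add hc x]

theorem riccatiRoot_pos (hc : 0 < c) (x : ℝ) : 0 < riccatiRoot c x :=
  div_pos two_pos (add_sqrt_sq_add_pos hc x)

theorem riccatiRoot_isRoot (hc : 0 < c) (x : ℝ) :
    c * riccatiRoot c x ^ 2 + x * riccatiRoot c x = 1 := by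
  have hpos := add_sqrt_sq_add_pos hc x
  have hs := Real.sq_sqrt (by positivity : 0 ≤ x ^ 2 + 4 * c)
  rw [riccatiRoot]
  set s := √(x ^ 2 + 4 * c)
  field_simp
  linear_combination -hs

theorem exists_hasDerivAt_riccatiRoot_neg (hc : 0 < c) (x : ℝ) :
    ∃ d < 0, HasDerivAt (riccatiRoot c) d x := by
  have hs : 0 < √(x ^ 2 + 4 * c) := (abs_nonneg x).trans_lt (abs_lt_sqrt_sq_add hc x)
  have hsq : HasDerivAt (fun t : ℝ => t ^ 2 + 4 * c) (2 * x) x := by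
    simpa using (hasDerivAt_pow 2 x).add_const (4 * c)
  have hsum : HasDerivAt (fun t => t + √(t ^ 2 + 4 * c)) (1 + x / √(x ^ 2 + 4 * c)) x :=
    (hasDerivAt_id x).add ((hsq.sqrt (by positivity)).congr_deriv (by field_simp))
  set s := √(x ^ 2 + 4 * c)
  refine ⟨_, ?_, (hasDerivAt_const x 2).div hsum (add_sqrt_sq_add_pos hc x).ne'⟩
  have hpos := add_sqrt_sq_add_pos hc x
  have : 0 < 1 + x / s := by
    rw [one_add_div hs.ne']
    exact div_pos (by linarith) hs
  simp only [zero_mul, zero_sub, neg_div, neg_lt_zero]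
  positivity

theorem lt_riccatiRoot_of_tendsto_zero {r : ℝ → ℝ} {x₀ : ℝ} (hc : 0 < c)
    (hx₀ : 0 ≤ x₀) (hr : ∀ x, x₀ ≤ x → HasDerivAt r (c * r x ^ 2 + x * r x - 1) x)
    (hlim : Tendsto r atTop (𝓝 0)) : r x₀ < riccatiRoot c x₀ := by
  by_contra! hle
  have hdiff : Differentiable ℝ (riccatiRoot c) := fun x =>
    (exists_hasDerivAt_riccatiRoot_neg hc x).choose_spec.2.differentiableAt
  -- `riccatiRoot c` decreases while `r' = 0` on it, so `r` cannot cross it downwards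
  have above : ∀ x, x₀ ≤ x → riccatiRoot c x ≤ r x := by
    intro x hx
    refine image_le_of_deriv_right_lt_deriv_boundary' hdiff.continuous.continuousOn
      (fun t _ => (hdiff t).hasDerivAt.hasDerivWithinAt) hle
      (fun t ht => (hr t ht.1).continuousAt.continuousWithinAt)
      (fun t ht => (hr t ht.1).hasDerivWithinAt) (fun t ht heq => ?_) ⟨hx, le_rfl⟩
    obtain ⟨d, hd, hderiv⟩ := exists_hasDerivAt_riccatiRoot_neg hc t
    rw [hderiv.deriv, ← heq, riccatiRoot_isRoot hc, sub_self]
    exact hd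
  have hmono : MonotoneOn r (Ici x₀) := by
    refine monotoneOn_of_hasDerivWithinAt_nonneg (convex_Ici x₀)
      (fun t ht => (hr t ht).continuousAt.continuousWithinAt)
      (fun t ht => (hr t (interior_subset ht)).hasDerivWithinAt) fun t ht => ?_
    rw [interior_Ici, mem_Ioi] at ht
    have hroot := riccatiRoot_isRoot hc t
    have hpos := riccatiRoot_pos hc t
    have habove := above t ht.le
    nlinarith [mul_nonneg (sub_nonneg.2 habove)
      (add_nonneg (mul_nonneg hc.le (by linarith)) (by linarith) :
        0 ≤ c * (r t + riccatiRoot c t) + t)]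
  obtain ⟨x, hx, hxlt⟩ := ((eventually_ge_atTop x₀).and
    (hlim.eventually (gt_mem_nhds (riccatiRoot_pos hc x₀)))).exists
  exact (hle.trans (hmono self_mem_Ici hx hx)).not_gt hxlt

end riccatiRoot

namespace IsParabolicCylinderU

variable {U U' : ℝ → ℝ → ℝ} (hU : IsParabolicCylinderU U U')
include hU

theorem solvesLinearODE (a : ℝ) : SolvesLinearODE (fun x => x ^ 2 / 4 + a) (U a) (U' a) :=
  ⟨hU.hasDeriv a, hU.ode a⟩

theorem pos_of_nonneg {a x : ℝ} (ha : -3/2 < a) (hx : 0 ≤ x) : 0 < U a x := by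
  rcases lt_or_ge (-1/2) a with h | h
  · exact hU.pos a x h
  · have hrec := hU.recurrence (a + 1) x
    rw [add_sub_cancel_right] at hrec
    rw [hrec]
    exact add_pos_of_nonneg_of_pos (mul_nonneg hx (hU.pos _ x (by linarith)).le)
      (mul_pos (by linarith) (hU.pos _ x (by linarith)))

theorem tendsto_id_mul (b : ℝ) : Tendsto (fun x => x * U b x) atTop (𝓝 0) := by
  have h := (hU.recessive (b - 1)).sub ((hU.recessive (b + 1)).const_mul (b + 1/2))
  rw [mul_zero, sub_zero] at h
  exact h.congr fun x => by linear_combination hU.recurrence b x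

theorem tendsto_deriv {b : ℝ} (hb : -1/2 < b) : Tendsto (U' b) atTop (𝓝 0) := by
  refine tendsto_deriv_atTop_of_monotoneOn (x₀ := 2) (hU.hasDeriv b) ?_ (hU.recessive b)
  refine monotoneOn_of_hasDerivWithinAt_nonneg (convex_Ici 2)
    (fun x _ => (hU.ode b x).continuousAt.continuousWithinAt)
    (fun x _ => (hU.ode b x).hasDerivWithinAt) fun x hx => ?_
  rw [interior_Ici, mem_Ioi] at hx
  exact mul_nonneg (by nlinarith) (hU.pos b x hb).le

theorem tendsto_wronskian_ladder {a s : ℝ} (ha : -1/2 < a) (has : -1/2 < a + s) :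
    Tendsto (fun x => (U' a x + s * x / 2 * U a x) * U' (a + s) x -
      ((x ^ 2 / 4 + a + s / 2) * U a x + s * x / 2 * U' a x) * U (a + s) x) atTop (𝓝 0) := by
  have hu := hU.recessive a
  have hv := hU.recessive (a + s)
  have hxu := hU.tendsto_id_mul a
  have hxv := hU.tendsto_id_mul (a + s)
  have hu' := hU.tendsto_deriv ha
  have hv' := hU.tendsto_deriv has
  have h := ((((hu'.mul hv').add ((hxu.mul hv').const_mul (s / 2))).sub
    ((hxu.mul hxv).div_const 4)).sub ((hu.mul hv).const_mul (a + s / 2))).sub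
    ((hu'.mul hxv).const_mul (s / 2))
  simp only [mul_zero, add_zero, zero_div, sub_zero] at h
  exact h.congr fun x => by ring

theorem exists_ladder_eq_const_mul {a s : ℝ} (hs : s ^ 2 = 1) (ha : -1/2 < a)
    (has : -1/2 < a + s) : ∃ k, ∀ x, U' a x + s * x / 2 * U a x = k * U (a + s) x :=
  ((hU.solvesLinearODE a).weber_ladder hs).exists_eq_const_mul (hU.solvesLinearODE (a + s))
    (fun x => (hU.pos _ x has).ne') (hU.tendsto_wronskian_ladder ha has)

theorem deriv_succ_eq {a : ℝ} (ha : -1/2 < a) (x : ℝ) :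
    U' (a + 1) x = x / 2 * U (a + 1) x - U a x := by
  obtain ⟨μ, hμ⟩ := hU.exists_ladder_eq_const_mul (a := a + 1) (s := -1) (by norm_num)
    (by linarith) (by linarith)
  obtain ⟨ν, hν⟩ := hU.exists_ladder_eq_const_mul (a := a + 1) (s := 1) (by norm_num)
    (by linarith) (by linarith)
  rw [show a + 1 + -1 = a by ring] at hμ
  have hrec : ∀ x, U a x = x * U (a + 1) x + (a + 1 + 1/2) * U (a + 1 + 1) x := fun x => by
    simpa using hU.recurrence (a + 1) x
  have key : ∀ x,
      (1 + μ) * x * U (a + 1) x = (ν - (a + 1 + 1/2) * μ) * U (a + 1 + 1) x := fun x => by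
    linear_combination hν x - hμ x - μ * hrec x
  have hν_eq : ν = (a + 1 + 1/2) * μ := by
    have := key 0
    simp only [mul_zero, zero_mul] at this
    linarith [(mul_eq_zero.1 this.symm).resolve_right (hU.pos _ 0 (by linarith)).ne']
  have hμ_eq : μ = -1 := by
    have := key 1
    rw [hν_eq, sub_self, zero_mul, mul_one] at this
    linarith [(mul_eq_zero.1 this).resolve_right (hU.pos _ 1 (by linarith)).ne']
  linear_combination hμ x + hμ_eq * U a x

theorem deriv_eq {a : ℝ} (ha : -1/2 < a) (x : ℝ) :
    U' a x = -(x / 2 * U a x) - (a + 1/2) * U (a + 1) x := by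
  obtain ⟨k, hk⟩ := hU.exists_ladder_eq_const_mul (s := 1) (by norm_num) ha (by linarith)
  have hfun : U' a = fun t => k * U (a + 1) t - t / 2 * U a t :=
    funext fun t => by linear_combination hk t
  have hderiv : HasDerivAt (fun t => k * U (a + 1) t - t / 2 * U a t)
      (k * U' (a + 1) 0 - (1 / 2 * U a 0 + 0 / 2 * U' a 0)) 0 :=
    ((hU.hasDeriv (a + 1) 0).const_mul k).sub
      (((hasDerivAt_id 0).div_const 2).mul (hU.hasDeriv a 0))
  have hk₀ := (hfun ▸ hU.ode a 0).unique hderiv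
  rw [hU.deriv_succ_eq ha 0] at hk₀
  have hk_eq : k = -(a + 1/2) := by
    have : (k + (a + 1/2)) * U a 0 = 0 := by linear_combination hk₀
    linarith [(mul_eq_zero.1 this).resolve_right (hU.pos a 0 ha).ne']
  linear_combination hk x + hk_eq * U (a + 1) x

theorem hasDerivAt_ratio {a : ℝ} (ha : -1/2 < a) (x : ℝ) :
    HasDerivAt (fun t => U (a + 1) t / U a t)
      ((a + 1/2) * (U (a + 1) x / U a x) ^ 2 + x * (U (a + 1) x / U a x) - 1) x := by
  have hx := (hU.pos a x ha).ne'
  refine ((hU.hasDeriv (a + 1) x).div (hU.hasDeriv a x) hx).congr_deriv ?_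
  rw [hU.deriv_eq ha, hU.deriv_succ_eq ha]
  field_simp
  ring

theorem tendsto_ratio {a : ℝ} (ha : -1/2 < a) :
    Tendsto (fun t => U (a + 1) t / U a t) atTop (𝓝 0) := by
  refine squeeze_zero' (Eventually.of_forall fun t =>
    (div_pos (hU.pos _ t (by linarith)) (hU.pos a t ha)).le) ?_ tendsto_inv_atTop_zero
  filter_upwards [eventually_gt_atTop 0] with t ht
  -- the recurrence gives `U(a,t) ≥ t U(a+1,t)`
  have hrec : U a t = t * U (a + 1) t + (a + 1 + 1/2) * U (a + 1 + 1) t := by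
    simpa using hU.recurrence (a + 1) t
  have := hU.pos (a + 1 + 1) t (by linarith)
  rw [div_le_iff₀ (hU.pos a t ha), inv_mul_eq_div, le_div_iff₀ ht, hrec]
  nlinarith

theorem ratio_lt_riccatiRoot {a x : ℝ} (ha : -1/2 < a) (hx : 0 ≤ x) :
    U (a + 1) x / U a x < riccatiRoot (a + 1/2) x :=
  lt_riccatiRoot_of_tendsto_zero (by linarith) hx (fun t _ => hU.hasDerivAt_ratio ha t)
    (hU.tendsto_ratio ha)

theorem riccatiRoot_lt_ratio {a x : ℝ} (ha : -1/2 < a) (hx : 0 ≤ x) :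
    riccatiRoot (a + 1/2) x < U a x / U (a - 1) x := by
  have hc : 0 < a + 1/2 := by linarith
  have hupper := (div_lt_iff₀ (hU.pos a x ha)).1 (hU.ratio_lt_riccatiRoot ha hx)
  have hρ := riccatiRoot_pos hc x
  have hroot := riccatiRoot_isRoot hc x
  set ρ := riccatiRoot (a + 1/2) x
  rw [lt_div_iff₀ (hU.pos_of_nonneg (by linarith) hx), hU.recurrence a x]
  calc ρ * (x * U a x + (a + 1/2) * U (a + 1) x)
      < ρ * (x * U a x + (a + 1/2) * (ρ * U a x)) := by gcongr
    _ = U a x := by linear_combination U a x * hroot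

theorem ratio_neg_half {x : ℝ} (hx : 0 < x) : U (-1/2) x / U (-1/2 - 1) x = x⁻¹ := by
  have hrec := hU.recurrence (-1/2) x
  rw [show (-1/2 : ℝ) + 1/2 = 0 by norm_num, zero_mul, add_zero] at hrec
  rw [hrec, div_mul_cancel_right₀ (hU.pos_of_nonneg (by norm_num) hx.le).ne']

end IsParabolicCylinderU

/-- For `n > 1/2` and `x ≥ 0`,
`2/(x + √(4n+2+x²)) < U(n,x)/U(n-1,x) < 2/(x + √(4n-2+x²))`;
the lower bound also holds for `n ∈ (-1/2, 1/2)`, and becomes an equality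
for `n = -1/2`. -/
theorem pcf_ratio_bounds (U U' : ℝ → ℝ → ℝ) (hU : IsParabolicCylinderU U U') :
    (∀ n x : ℝ, 1/2 < n → 0 ≤ x →
      2 / (x + Real.sqrt (4 * n + 2 + x ^ 2)) < U n x / U (n - 1) x ∧
      U n x / U (n - 1) x < 2 / (x + Real.sqrt (4 * n - 2 + x ^ 2))) ∧
    (∀ n x : ℝ, -1/2 < n → n < 1/2 → 0 ≤ x →
      2 / (x + Real.sqrt (4 * n + 2 + x ^ 2)) < U n x / U (n - 1) x) ∧
    (∀ x : ℝ, 0 < x →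
      2 / (x + Real.sqrt (4 * (-1/2 : ℝ) + 2 + x ^ 2)) =
        U (-1/2) x / U (-1/2 - 1) x) := by
  have bound_eq : ∀ b x : ℝ, 2 / (x + √(4 * b + 2 + x ^ 2)) = riccatiRoot (b + 1/2) x :=
    fun b x => by rw [riccatiRoot]; ring_nf
  refine ⟨fun n x hn hx => ⟨?_, ?_⟩, fun n x hn _ hx => ?_, fun x hx => ?_⟩
  · rw [bound_eq]
    exact hU.riccatiRoot_lt_ratio (by linarith) hx
  · have h := hU.ratio_lt_riccatiRoot (a := n - 1) (by linarith) hx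
    rwa [sub_add_cancel, ← bound_eq, show 4 * (n - 1) + 2 = 4 * n - 2 by ring] at h
  · rw [bound_eq]
    exact hU.riccatiRoot_lt_ratio hn hx
  · rw [hU.ratio_neg_half hx, show 4 * (-1/2 : ℝ) + 2 + x ^ 2 = x ^ 2 by ring,
      Real.sqrt_sq hx.le]
    field_simp
    ring
end

section
/- For all real x and all n ≥ 1/2, the logarithmic derivative of the parabolic cylinder function satisfies -sqrt(x²/4 + n + 1/2) < U'(n,x)/U(n,x) < -sqrt(x²/4 + n - 1/2); the left inequality in fact holds for all n > -1/2. -/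
open Filter

/-!
Write `w = U'/U`; it solves the Riccati equation `w' = x²/4 + n - w²` on all of `ℝ`.

* `(U' + xU/2) e^{-x²/4}` has derivative `(n + 1/2) U e^{-x²/4} > 0`. If it were ever `≥ 0`, it
  would be bounded below by a positive constant, so `U' + xU/2 ≥ D e^{x²/4} ≥ D x` and `U'` would
  eventually be positive, which is impossible for a positive function tending to `0`.
  Hence `w < -x/2`.
* `y = -√(x²/4 + n + 1/2) ≤ 0` is a strict supersolution (`y' > x²/4 + n - y²`). Once `w ≤ y`,
  `w` stays below `y` and `h = w - y` satisfies `h' ≤ -h²`, so `1/h` increases at rate `≥ 1`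
  while negative: `w` would blow up in finite time.
* For `n > 1/2`, `y = -√(x²/4 + n - 1/2)` is a strict subsolution. Once `w ≥ y`, `w` stays above
  `y`; together with `w < -x/2 ≤ 0` this gives `w² < y²`, hence `w' > 1/2`, so `w → +∞`,
  contradicting `w < 0`.
* For `n = 1/2` the bound reads `w < -|x|/2`. For `x ≤ 0` use that `(U' - xU/2) e^{x²/4}` has
  derivative `(n - 1/2) U e^{x²/4} ≥ 0` and is negative at `0`.
-/

open Set Real

theorem neg_of_deriv_neg_of_eq_zero {f f' : ℝ → ℝ} {a : ℝ}
    (hf : ∀ x, HasDerivAt f (f' x) x) (ha : f a ≤ 0)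
    (hzero : ∀ x, a ≤ x → f x = 0 → f' x < 0) : ∀ x, a < x → f x < 0 := by
  intro x hx
  have hcont : Continuous f := continuous_iff_continuousAt.2 fun y => (hf y).continuousAt
  have hle : ∀ y ∈ Icc a (x + 1), f y ≤ 0 :=
    image_le_of_deriv_right_lt_deriv_boundary (B := fun _ => 0) (B' := fun _ => 0)
      hcont.continuousOn (fun y _ => (hf y).hasDerivWithinAt) ha
      (fun _ => hasDerivAt_const _ _) fun y hy hy0 => hzero y hy.1 hy0
  refine (hle x ⟨hx.le, by linarith⟩).lt_of_ne fun hx0 => ?_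
  have hmax : IsLocalMax f x :=
    mem_of_superset (Icc_mem_nhds hx (by linarith)) fun y hy => hx0 ▸ hle y hy
  exact (hzero x hx.le hx0).ne (hmax.hasDerivAt_eq_zero (hf x))

theorem tendsto_atTop_of_le_deriv {f f' : ℝ → ℝ} {a ε : ℝ} (hε : 0 < ε)
    (hf : ∀ x, a < x → HasDerivAt f (f' x) x) (hf' : ∀ x, a < x → ε ≤ f' x) :
    Tendsto f atTop atTop := by
  have hb : ∀ x ∈ Ici (a + 1), a < x := fun x hx => by linarith [mem_Ici.1 hx]
  have hgrowth : ∀ x, a + 1 ≤ x → ε * (x - (a + 1)) ≤ f x - f (a + 1) := fun x hx =>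
    (convex_Ici (a + 1)).mul_sub_le_image_sub_of_le_deriv
      (fun y hy => (hf y (hb y hy)).continuousAt.continuousWithinAt)
      (fun y hy => (hf y (hb y (interior_subset hy))).differentiableAt.differentiableWithinAt)
      (fun y hy => (hf y (hb y (interior_subset hy))).deriv ▸ hf' y (hb y (interior_subset hy)))
      _ self_mem_Ici _ hx hx
  refine tendsto_atTop_mono' atTop ((eventually_ge_atTop (a + 1)).mono fun x hx => ?_)
    (tendsto_atTop_add_const_left _ (f (a + 1))
      ((tendsto_atTop_add_const_right _ (-(a + 1)) tendsto_id).const_mul_atTop hε))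
  dsimp only [id]
  linarith [hgrowth x hx]

theorem exists_nonneg_of_deriv_le_neg_sq {h h' : ℝ → ℝ} {a : ℝ}
    (hh : ∀ x, a < x → HasDerivAt h (h' x) x) (hle : ∀ x, a < x → h' x ≤ -h x ^ 2) :
    ∃ x, a < x ∧ 0 ≤ h x := by
  by_contra! hneg
  have hinv : Tendsto (fun x => (h x)⁻¹) atTop atTop :=
    tendsto_atTop_of_le_deriv one_pos (fun x hx => (hh x hx).inv (hneg x hx).ne) fun x hx => by
      rw [le_div_iff₀ (sq_pos_of_neg (hneg x hx))]
      linarith [hle x hx]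
  obtain ⟨x, hx, hpos⟩ := ((eventually_gt_atTop a).and (hinv.eventually_gt_atTop 0)).exists
  exact (inv_lt_zero.2 (hneg x hx)).not_gt hpos

theorem frequently_deriv_neg_of_tendsto_zero {f f' : ℝ → ℝ} (hf : ∀ x, HasDerivAt f (f' x) x)
    (hpos : ∀ x, 0 < f x) (hlim : Tendsto f atTop (nhds 0)) : ∃ᶠ x in atTop, f' x < 0 := by
  by_contra! h
  obtain ⟨X, hX⟩ := eventually_atTop.1 h
  have hmono : MonotoneOn f (Ici X) :=
    monotoneOn_of_hasDerivWithinAt_nonneg (convex_Ici X)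
      (fun x _ => (hf x).continuousAt.continuousWithinAt) (fun x _ => (hf x).hasDerivWithinAt)
      fun x hx => hX x (interior_subset hx)
  obtain ⟨x, hXx, hx⟩ :=
    ((eventually_ge_atTop X).and (hlim.eventually (gt_mem_nhds (hpos X)))).exists
  exact (hmono self_mem_Ici hXx hXx).not_gt hx

section Riccati

variable {q w y y' : ℝ → ℝ}

theorem riccati_subsolution_lt (hw : ∀ x, HasDerivAt w (q x - w x ^ 2) x)
    (hy : ∀ x, HasDerivAt y (y' x) x) (hsub : ∀ x, y' x < q x - y x ^ 2) {a : ℝ}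
    (ha : y a ≤ w a) : ∀ x, a < x → y x < w x := fun x hx =>
  sub_neg.1 <| neg_of_deriv_neg_of_eq_zero (fun x => (hy x).sub (hw x)) (sub_nonpos.2 ha)
    (fun t _ ht => by
      rw [Pi.sub_apply, sub_eq_zero] at ht
      linarith [ht ▸ hsub t]) x hx

theorem lt_riccati_supersolution (hw : ∀ x, HasDerivAt w (q x - w x ^ 2) x)
    (hy : ∀ x, HasDerivAt y (y' x) x) (hsup : ∀ x, q x - y x ^ 2 < y' x) {a : ℝ}
    (ha : w a ≤ y a) : ∀ x, a < x → w x < y x := fun x hx =>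
  sub_neg.1 <| neg_of_deriv_neg_of_eq_zero (fun x => (hw x).sub (hy x)) (sub_nonpos.2 ha)
    (fun t _ ht => by
      rw [Pi.sub_apply, sub_eq_zero] at ht
      linarith [ht ▸ hsup t]) x hx

theorem riccati_supersolution_lt_of_nonpos (hw : ∀ x, HasDerivAt w (q x - w x ^ 2) x)
    (hy : ∀ x, HasDerivAt y (y' x) x) (hsup : ∀ x, q x - y x ^ 2 < y' x)
    (hy_nonpos : ∀ x, y x ≤ 0) (x : ℝ) : y x < w x := by
  by_contra! hx
  have hlt := lt_riccati_supersolution hw hy hsup hx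
  obtain ⟨t, ht, hnonneg⟩ := exists_nonneg_of_deriv_le_neg_sq (h := fun t => w t - y t)
    (fun t _ => (hw t).sub (hy t)) fun t ht => by
      nlinarith [hsup t, hlt t ht,
        mul_nonneg_of_nonpos_of_nonpos (hy_nonpos t) (sub_nonpos.2 (hlt t ht).le)]
  linarith [hlt t ht]

end Riccati

theorem hasDerivAt_sqrt_sq_div_four_add {c : ℝ} (hc : 0 < c) (x : ℝ) :
    HasDerivAt (fun t => √(t ^ 2 / 4 + c)) (x / (4 * √(x ^ 2 / 4 + c))) x := by
  have hquad : HasDerivAt (fun t => t ^ 2 / 4 + c) (x / 2) x :=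
    (((hasDerivAt_pow 2 x).div_const 4).add_const c).congr_deriv (by ring)
  refine (hquad.sqrt (by positivity)).congr_deriv ?_
  field_simp
  ring

theorem abs_div_four_sqrt_sq_div_four_add_lt {c : ℝ} (hc : 0 < c) (x : ℝ) :
    |x / (4 * √(x ^ 2 / 4 + c))| < 1 / 2 := by
  have hpos : 0 < √(x ^ 2 / 4 + c) := sqrt_pos.2 (by positivity)
  have habs : |x| < 2 * √(x ^ 2 / 4 + c) := by
    nlinarith [sq_sqrt (show 0 ≤ x ^ 2 / 4 + c by positivity), sq_abs x, abs_nonneg x]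
  rw [abs_div, abs_of_pos (by positivity : (0:ℝ) < 4 * √(x ^ 2 / 4 + c)),
    div_lt_iff₀ (by positivity)]
  linarith

namespace IsParabolicCylinderU

variable {U U' : ℝ → ℝ → ℝ} (hU : IsParabolicCylinderU U U') {n : ℝ}
include hU

theorem hasDerivAt_logDeriv (hn : -1/2 < n) (x : ℝ) :
    HasDerivAt (fun t => U' n t / U n t) (x ^ 2 / 4 + n - (U' n x / U n x) ^ 2) x := by
  have hUx := (hU.pos n x hn).ne'
  refine ((hU.ode n x).div (hU.hasDeriv n x) hUx).congr_deriv ?_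
  field_simp

theorem hasDerivAt_mul_exp {s : ℝ} (hs : s ^ 2 = 1) (x : ℝ) :
    HasDerivAt (fun t => (U' n t + s * t / 2 * U n t) * exp (-(s * t ^ 2 / 4)))
      ((n + s / 2) * U n x * exp (-(s * x ^ 2 / 4))) x := by
  have hexp : HasDerivAt (fun t => exp (-(s * t ^ 2 / 4)))
      (-(s * x / 2) * exp (-(s * x ^ 2 / 4))) x := by
    refine (((hasDerivAt_pow 2 x).const_mul s).div_const 4).fun_neg.exp.congr_deriv ?_
    ring
  have hlin : HasDerivAt (fun t => s * t / 2) (s / 2) x := by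
    simpa using ((hasDerivAt_id x).const_mul s).div_const 2
  refine (((hU.ode n x).fun_add (hlin.fun_mul (hU.hasDeriv n x))).fun_mul hexp).congr_deriv ?_
  linear_combination (-(x ^ 2 / 4) * U n x * exp (-(s * x ^ 2 / 4))) * hs

theorem deriv_add_half_mul_neg (hn : -1/2 < n) (x : ℝ) : U' n x + x / 2 * U n x < 0 := by
  by_contra! hx
  have hM := hU.hasDerivAt_mul_exp (n := n) (one_pow 2)
  simp only [one_mul] at hM
  set M := fun t => (U' n t + t / 2 * U n t) * exp (-(t ^ 2 / 4))
  have hM_mono : StrictMono M := strictMono_of_hasDerivAt_pos hM fun t => by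
    have := hU.pos n t hn
    have : 0 < n + 1 / 2 := by linarith
    positivity
  set D := M (x + 1)
  have hD : 0 < D := lt_of_le_of_lt (mul_nonneg hx (exp_pos _).le) (hM_mono (lt_add_one x))
  have hgrowth : ∀ t, x + 1 ≤ t → D * t ≤ U' n t + t / 2 * U n t := fun t ht => by
    have hMt : D ≤ M t := hM_mono.monotone ht
    have hexp : t ≤ exp (t ^ 2 / 4) := by
      nlinarith [add_one_le_exp (t ^ 2 / 4), sq_nonneg (t / 2 - 1)]
    have hMexp : M t * exp (t ^ 2 / 4) = U' n t + t / 2 * U n t := by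
      simp only [M, mul_assoc, ← exp_add, neg_add_cancel, exp_zero, mul_one]
    calc D * t ≤ D * exp (t ^ 2 / 4) := mul_le_mul_of_nonneg_left hexp hD.le
      _ ≤ M t * exp (t ^ 2 / 4) := mul_le_mul_of_nonneg_right hMt (exp_pos _).le
      _ = U' n t + t / 2 * U n t := hMexp
  have hderiv_pos : ∀ᶠ t in atTop, 0 < U' n t := by
    filter_upwards [eventually_ge_atTop (max (x + 1) 1),
      (hU.recessive n).eventually (gt_mem_nhds (by linarith : 0 < 2 * D))] with t ht hUt
    have h1 := hgrowth t (le_of_max_le_left ht)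
    have h2 : 1 ≤ t := le_of_max_le_right ht
    nlinarith
  obtain ⟨t, hneg, hpos⟩ := ((frequently_deriv_neg_of_tendsto_zero (hU.hasDeriv n)
    (fun t => hU.pos n t hn) (hU.recessive n)).and_eventually hderiv_pos).exists
  linarith

theorem logDeriv_lt_neg_half (hn : -1/2 < n) (x : ℝ) : U' n x / U n x < -(x / 2) := by
  rw [div_lt_iff₀ (hU.pos n x hn)]
  linarith [hU.deriv_add_half_mul_neg hn x]

theorem deriv_sub_half_mul_neg (hn : 1/2 ≤ n) {x : ℝ} (hx : x ≤ 0) :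
    U' n x - x / 2 * U n x < 0 := by
  have hN := hU.hasDerivAt_mul_exp (n := n) (s := -1) (by norm_num)
  simp only [neg_mul, one_mul, neg_neg, neg_div] at hN
  have hN_mono := monotone_of_hasDerivAt_nonneg hN fun t => by
    have := hU.pos n t (by linarith)
    have : 0 ≤ n + -(1 / 2) := by linarith
    positivity
  have hN0 : (U' n x - x / 2 * U n x) * exp (x ^ 2 / 4) ≤ U' n 0 := by
    simpa [sub_eq_add_neg] using hN_mono hx
  have h0 : U' n 0 < 0 := by simpa using hU.deriv_add_half_mul_neg (n := n) (by linarith) 0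
  exact neg_of_mul_neg_left (hN0.trans_lt h0) (exp_pos _).le

theorem logDeriv_lt_neg_abs_half (hn : 1/2 ≤ n) (x : ℝ) : U' n x / U n x < -(|x| / 2) := by
  rcases le_total 0 x with hx | hx
  · rw [abs_of_nonneg hx]
    exact hU.logDeriv_lt_neg_half (by linarith) x
  · rw [abs_of_nonpos hx, div_lt_iff₀ (hU.pos n x (by linarith))]
    linarith [hU.deriv_sub_half_mul_neg hn hx]

theorem neg_sqrt_lt_logDeriv (hn : -1/2 < n) (x : ℝ) :
    -√(x ^ 2 / 4 + n + 1/2) < U' n x / U n x := by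
  have hc : 0 < n + 1/2 := by linarith
  have hsup : ∀ t, t ^ 2 / 4 + n - (-√(t ^ 2 / 4 + (n + 1/2))) ^ 2 <
      -(t / (4 * √(t ^ 2 / 4 + (n + 1/2)))) := fun t => by
    rw [neg_sq, sq_sqrt (by positivity)]
    linarith [le_abs_self (t / (4 * √(t ^ 2 / 4 + (n + 1/2)))),
      abs_div_four_sqrt_sq_div_four_add_lt hc t]
  rw [add_assoc]
  exact riccati_supersolution_lt_of_nonpos (hU.hasDerivAt_logDeriv hn)
    (fun t => (hasDerivAt_sqrt_sq_div_four_add hc t).fun_neg) hsup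
    (fun t => neg_nonpos.2 (sqrt_nonneg _)) x

theorem logDeriv_lt_neg_sqrt_of_lt (hn : 1/2 < n) (x : ℝ) :
    U' n x / U n x < -√(x ^ 2 / 4 + n - 1/2) := by
  have hc : 0 < n - 1/2 := by linarith
  have hn' : -1/2 < n := by linarith
  have hsub : ∀ t, -(t / (4 * √(t ^ 2 / 4 + (n - 1/2)))) <
      t ^ 2 / 4 + n - (-√(t ^ 2 / 4 + (n - 1/2))) ^ 2 := fun t => by
    rw [neg_sq, sq_sqrt (by positivity)]
    linarith [neg_abs_le (t / (4 * √(t ^ 2 / 4 + (n - 1/2)))),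
      abs_div_four_sqrt_sq_div_four_add_lt hc t]
  rw [add_sub_assoc]
  by_contra! hx
  have hgt := riccati_subsolution_lt (hU.hasDerivAt_logDeriv hn')
    (fun t => (hasDerivAt_sqrt_sq_div_four_add hc t).fun_neg) hsub hx
  have hderiv : ∀ t, max x 0 < t → 1/2 ≤ t ^ 2 / 4 + n - (U' n t / U n t) ^ 2 := by
    intro t ht
    have hG := hgt t ((le_max_left x 0).trans_lt ht)
    have hw := hU.logDeriv_lt_neg_half hn' t
    have hG_sq := sq_sqrt (show 0 ≤ t ^ 2 / 4 + (n - 1/2) by positivity)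
    have ht0 := (le_max_right x 0).trans_lt ht
    nlinarith [sqrt_nonneg (t ^ 2 / 4 + (n - 1/2))]
  have hw_top :=
    tendsto_atTop_of_le_deriv (by norm_num) (fun t _ => hU.hasDerivAt_logDeriv hn' t) hderiv
  obtain ⟨t, ht, hpos⟩ :=
    ((eventually_gt_atTop (max x 0)).and (hw_top.eventually_gt_atTop 0)).exists
  linarith [hU.logDeriv_lt_neg_half hn' t, (le_max_right x 0).trans_lt ht]

theorem logDeriv_lt_neg_sqrt (hn : 1/2 ≤ n) (x : ℝ) :
    U' n x / U n x < -√(x ^ 2 / 4 + n - 1/2) := by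
  rcases hn.eq_or_lt with rfl | hn
  · rw [add_sub_cancel_right, show x ^ 2 / 4 = (|x| / 2) ^ 2 by rw [div_pow, sq_abs]; ring,
      sqrt_sq (by positivity)]
    exact hU.logDeriv_lt_neg_abs_half le_rfl x
  · exact hU.logDeriv_lt_neg_sqrt_of_lt hn x

end IsParabolicCylinderU

/-- For all real `x` and `n ≥ 1/2`,
`-√(x²/4 + n + 1/2) < U'(n,x)/U(n,x) < -√(x²/4 + n - 1/2)`;
the left inequality holds for all `n > -1/2`. -/
theorem pcf_log_deriv_bounds (U U' : ℝ → ℝ → ℝ)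
    (hU : IsParabolicCylinderU U U') :
    (∀ n x : ℝ, 1/2 ≤ n →
      -Real.sqrt (x ^ 2 / 4 + n + 1/2) < U' n x / U n x ∧
      U' n x / U n x < -Real.sqrt (x ^ 2 / 4 + n - 1/2)) ∧
    (∀ n x : ℝ, -1/2 < n →
      -Real.sqrt (x ^ 2 / 4 + n + 1/2) < U' n x / U n x) :=
  ⟨fun n x hn => ⟨hU.neg_sqrt_lt_logDeriv (by linarith) x, hU.logDeriv_lt_neg_sqrt hn x⟩,
    fun n x hn => hU.neg_sqrt_lt_logDeriv hn x⟩
end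

section
/- For n ≥ 1 and all x ≥ 0, the ratio of successive iterated complementary error functions satisfies 1/(x + sqrt(2(n+1) + x²)) < iⁿerfc(x)/iⁿ⁻¹erfc(x) < 1/(x + sqrt(2n + x²)). -/
/-!
For every real `x`, `iⁿerfc x = (2/√π) ∫_x^∞ (t - x)ⁿ/n! e^{-t²} dt`. Integrating
`d/dt ((t - x)ⁿ⁺¹ e^{-t²})` by parts gives the recurrence
`iⁿerfc = 2(n+2) iⁿ⁺²erfc + 2x iⁿ⁺¹erfc`, and Cauchy–Schwarz (strict, as `t - x` is not constant)
gives `(n+1) (iⁿ⁺¹erfc)² < (n+2) iⁿerfc iⁿ⁺²erfc`. Together they say that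
`ρ = iⁿ⁺¹erfc / iⁿerfc` satisfies `2(n+1)ρ² + 2xρ < 1`, i.e. `ρ` lies below the positive root
`1/(x + √(2(n+1) + x²))`. Substituting this upper bound for `iⁿ⁺²erfc / iⁿ⁺¹erfc` into the
recurrence gives the lower bound for `ρ`.
-/

open MeasureTheory

/-- The iterated complementary error functions:
`i⁰erfc = erfc`, `iⁿerfc(x) = ∫_x^∞ iⁿ⁻¹erfc(t) dt`. -/
noncomputable def itErfc : ℕ → ℝ → ℝ
  | 0, x => (2 / Real.sqrt Real.pi) * ∫ t in Set.Ioi x, Real.exp (-t ^ 2)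
  | n + 1, x => ∫ t in Set.Ioi x, itErfc n t

open Set Filter Topology Real
open scoped Nat

lemma hasDerivAt_integral_Ioi {E : Type*} [NormedAddCommGroup E] [NormedSpace ℝ E]
    [CompleteSpace E] {f : ℝ → E} (hf : Integrable f) (hcont : Continuous f) (y : ℝ) :
    HasDerivAt (fun z => ∫ t in Ioi z, f t) (-f y) y := by
  have hsplit (z : ℝ) : ∫ t in Ioi z, f t = (∫ t in Ioi 0, f t) - ∫ t in 0..z, f t :=
    eq_sub_of_add_eq' (intervalIntegral.integral_interval_add_Ioi hf.integrableOn hf.integrableOn)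
  rw [funext hsplit]
  exact (hcont.integral_hasStrictDerivAt 0 y).hasDerivAt.const_sub _

lemma setIntegral_Ioi_pos {f : ℝ → ℝ} {x : ℝ} (hf : IntegrableOn f (Ioi x))
    (hnonneg : ∀ t ∈ Ioi x, 0 ≤ f t) (hpos : ∀ᶠ t in atTop, 0 < f t) :
    0 < ∫ t in Ioi x, f t := by
  obtain ⟨b, hb⟩ := eventually_atTop.1 hpos
  rw [setIntegral_pos_iff_support_of_nonneg_ae (ae_restrict_of_forall_mem measurableSet_Ioi hnonneg)
    hf]
  have hsub : Ioi (max b x) ⊆ Function.support f ∩ Ioi x := fun t ht =>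
    ⟨(hb t (le_max_left b x |>.trans ht.le)).ne', (le_max_right b x).trans_lt ht⟩
  exact (by simp : (0 : ENNReal) < volume (Ioi (max b x))).trans_le (measure_mono hsub)

lemma integrable_pow_mul_exp_neg_sq (k : ℕ) : Integrable fun t : ℝ => t ^ k * exp (-t ^ 2) := by
  simpa using integrable_rpow_mul_exp_neg_mul_sq one_pos
    ((neg_one_lt_zero).trans_le (Nat.cast_nonneg k))

lemma sub_pow_mul_exp_neg_sq_eq_sum (m : ℕ) (x t : ℝ) :
    (t - x) ^ m * exp (-t ^ 2) =
      ∑ k ∈ Finset.range (m + 1), (m.choose k * (-x) ^ (m - k)) * (t ^ k * exp (-t ^ 2)) := by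
  rw [sub_eq_add_neg, add_pow, Finset.sum_mul]
  exact Finset.sum_congr rfl fun k _ => by ring

lemma integrable_sub_pow_mul_exp_neg_sq (m : ℕ) (x : ℝ) :
    Integrable fun t : ℝ => (t - x) ^ m * exp (-t ^ 2) := by
  simp_rw [sub_pow_mul_exp_neg_sq_eq_sum m x]
  exact integrable_finsetSum _ fun k _ => (integrable_pow_mul_exp_neg_sq k).const_mul _

noncomputable def gaussShiftedMoment (m : ℕ) (x : ℝ) : ℝ :=
  ∫ t in Ioi x, (t - x) ^ m * exp (-t ^ 2)

lemma gaussShiftedMoment_eq_sum (m : ℕ) (x : ℝ) :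
    gaussShiftedMoment m x = ∑ k ∈ Finset.range (m + 1),
      (m.choose k * (-x) ^ (m - k)) * ∫ t in Ioi x, t ^ k * exp (-t ^ 2) := by
  simp_rw [gaussShiftedMoment, sub_pow_mul_exp_neg_sq_eq_sum m x]
  rw [integral_finsetSum _ fun k _ => ((integrable_pow_mul_exp_neg_sq k).const_mul _).integrableOn]
  simp_rw [integral_const_mul]

lemma hasDerivAt_choose_mul_neg_pow (m k : ℕ) (y : ℝ) :
    HasDerivAt (fun z : ℝ => ((m + 1).choose k : ℝ) * (-z) ^ (m + 1 - k))
      (-((m + 1) * (m.choose k * (-y) ^ (m - k)))) y := by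
  rcases Nat.lt_or_ge m k with hk | hk
  · simpa [Nat.sub_eq_zero_of_le hk, Nat.choose_eq_zero_of_lt hk] using
      hasDerivAt_const y (((m + 1).choose k : ℝ))
  · obtain ⟨j, rfl⟩ := Nat.exists_eq_add_of_le hk
    have hchoose : ((k + j + 1).choose k : ℝ) * (j + 1) = (k + j + 1) * (k + j).choose k := by
      have := Nat.choose_mul_succ_eq (k + j) k
      rw [show k + j + 1 - k = j + 1 by omega] at this
      exact_mod_cast this.symm.trans (mul_comm _ _)
    rw [show k + j + 1 - k = j + 1 by omega, show k + j - k = j by omega]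
    refine (((hasDerivAt_neg' y).fun_pow (j + 1)).const_mul _).congr_deriv ?_
    rw [Nat.add_sub_cancel]
    push_cast
    linear_combination -(-y) ^ j * hchoose

lemma hasDerivAt_gaussShiftedMoment_succ (m : ℕ) (y : ℝ) :
    HasDerivAt (gaussShiftedMoment (m + 1)) (-((m + 1) * gaussShiftedMoment m y)) y := by
  have hsum := HasDerivAt.fun_sum fun k (_ : k ∈ Finset.range (m + 1 + 1)) =>
    (hasDerivAt_choose_mul_neg_pow m k y).fun_mul <|
      hasDerivAt_integral_Ioi (integrable_pow_mul_exp_neg_sq k) (by fun_prop) y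
  rw [show gaussShiftedMoment (m + 1) = _ from funext (gaussShiftedMoment_eq_sum (m + 1))]
  refine hsum.congr_deriv ?_
  -- the boundary terms add up to `(y - y) ^ (m + 1) * exp (-y ^ 2) = 0`
  have hboundary := sub_pow_mul_exp_neg_sq_eq_sum (m + 1) y y
  rw [sub_self, zero_pow m.succ_ne_zero, zero_mul] at hboundary
  rw [Finset.sum_add_distrib]
  simp only [mul_neg, Finset.sum_neg_distrib, ← hboundary, neg_zero, add_zero]
  rw [Finset.sum_range_succ, Nat.choose_succ_self, gaussShiftedMoment_eq_sum, Finset.mul_sum]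
  simp only [Nat.cast_zero, zero_mul, mul_zero, neg_zero, add_zero, neg_mul, mul_assoc,
    Finset.sum_neg_distrib]

section ShiftedMoment

variable (m : ℕ) (x : ℝ)

lemma integrable_three_terms_mul_exp_neg_sq (a b c : ℝ) :
    Integrable fun t : ℝ =>
      (a * (t - x) ^ (m + 2) + b * (t - x) ^ (m + 1) + c * (t - x) ^ m) * exp (-t ^ 2) := by
  have hI (j : ℕ) (d : ℝ) := (integrable_sub_pow_mul_exp_neg_sq j x).const_mul d
  refine (((hI (m + 2) a).add (hI (m + 1) b)).add (hI m c)).congr (ae_of_all _ fun t => ?_)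
  simp only [Pi.add_apply]
  ring

lemma integral_three_terms_mul_exp_neg_sq (a b c : ℝ) :
    ∫ t in Ioi x, (a * (t - x) ^ (m + 2) + b * (t - x) ^ (m + 1) + c * (t - x) ^ m) * exp (-t ^ 2)
      = a * gaussShiftedMoment (m + 2) x + b * gaussShiftedMoment (m + 1) x +
          c * gaussShiftedMoment m x := by
  have hI (j : ℕ) (d : ℝ) :=
    ((integrable_sub_pow_mul_exp_neg_sq j x).const_mul d).integrableOn (s := Ioi x)
  simp_rw [add_mul, mul_assoc]
  rw [integral_add ?_ (hI _ c), integral_add (hI _ a) (hI _ b)]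
  · simp_rw [integral_const_mul, gaussShiftedMoment]
  · exact (hI _ a).add (hI _ b)

lemma gaussShiftedMoment_pos : 0 < gaussShiftedMoment m x :=
  setIntegral_Ioi_pos (integrable_sub_pow_mul_exp_neg_sq m x).integrableOn
    (fun _ ht => (mul_pos (pow_pos (sub_pos.2 ht) m) (exp_pos _)).le)
    ((eventually_gt_atTop x).mono fun _ ht => mul_pos (pow_pos (sub_pos.2 ht) m) (exp_pos _))

lemma gaussShiftedMoment_recurrence :
    (m + 1) * gaussShiftedMoment m x =
      2 * gaussShiftedMoment (m + 2) x + 2 * x * gaussShiftedMoment (m + 1) x := by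
  have hderiv (t : ℝ) : HasDerivAt (fun t => (t - x) ^ (m + 1) * exp (-t ^ 2))
      ((-2 * (t - x) ^ (m + 2) + -2 * x * (t - x) ^ (m + 1) + (m + 1) * (t - x) ^ m) *
        exp (-t ^ 2)) t := by
    refine ((((hasDerivAt_id' t).sub_const x).fun_pow (m + 1)).fun_mul
      (hasDerivAt_pow 2 t).fun_neg.exp).congr_deriv ?_
    push_cast
    ring
  have hint := (integrable_three_terms_mul_exp_neg_sq m x (-2) (-2 * x) (m + 1)).integrableOn
    (s := Ioi x)
  have hlim := tendsto_zero_of_hasDerivAt_of_integrableOn_Ioi (fun t _ => hderiv t) hint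
    (integrable_sub_pow_mul_exp_neg_sq (m + 1) x).integrableOn
  have h := integral_Ioi_of_hasDerivAt_of_tendsto' (fun t _ => hderiv t) hint hlim
  rw [integral_three_terms_mul_exp_neg_sq, sub_self, zero_pow m.succ_ne_zero, zero_mul,
    sub_zero] at h
  linarith

lemma gaussShiftedMoment_sq_lt :
    gaussShiftedMoment (m + 1) x ^ 2 < gaussShiftedMoment m x * gaussShiftedMoment (m + 2) x := by
  -- for this `c`, the integral of `(t - x) ^ m (t - x - c) ^ 2 e^{-t²}` is the difference of the
  -- two sides of the goal divided by `gaussShiftedMoment m x`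
  set c := gaussShiftedMoment (m + 1) x / gaussShiftedMoment m x with hc
  have hsq (t : ℝ) : 1 * (t - x) ^ (m + 2) + -2 * c * (t - x) ^ (m + 1) + c ^ 2 * (t - x) ^ m =
      (t - x) ^ m * (t - x - c) ^ 2 := by ring
  have hpos := setIntegral_Ioi_pos
    (integrable_three_terms_mul_exp_neg_sq m x 1 (-2 * c) (c ^ 2)).integrableOn
    (fun t ht => by
      rw [hsq]
      exact mul_nonneg (mul_nonneg (pow_pos (sub_pos.2 ht) m).le (sq_nonneg _)) (exp_pos _).le)
    ((eventually_gt_atTop (x + |c|)).mono fun t ht => by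
      rw [hsq]
      have := le_abs_self c
      have := abs_nonneg c
      exact mul_pos (mul_pos (pow_pos (by linarith) m) (pow_pos (by linarith) 2)) (exp_pos _))
  have h0 := gaussShiftedMoment_pos m x
  rw [integral_three_terms_mul_exp_neg_sq, hc] at hpos
  field_simp at hpos
  linarith

lemma tendsto_gaussShiftedMoment_atTop : Tendsto (gaussShiftedMoment m) atTop (𝓝 0) := by
  refine squeeze_zero' (Eventually.of_forall fun y => (gaussShiftedMoment_pos m y).le) ?_
    (tendsto_integral_Ioi_zero (f := fun t => t ^ m * exp (-t ^ 2)) (μ := volume) tendsto_id)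
  filter_upwards [eventually_ge_atTop 0] with y hy
  refine setIntegral_mono_on (integrable_sub_pow_mul_exp_neg_sq m y).integrableOn
    (integrable_pow_mul_exp_neg_sq m).integrableOn measurableSet_Ioi fun t ht => ?_
  exact mul_le_mul_of_nonneg_right (pow_le_pow_left₀ (sub_nonneg.2 ht.le) (by linarith) m)
    (exp_pos _).le

end ShiftedMoment

lemma integral_Ioi_gaussShiftedMoment (n : ℕ) (x : ℝ) :
    ∫ t in Ioi x, gaussShiftedMoment n t = gaussShiftedMoment (n + 1) x / (n + 1) := by
  have h := integral_Ioi_of_hasDerivAt_of_nonneg' (a := x)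
    (g := fun z => -gaussShiftedMoment (n + 1) z / (n + 1))
    (fun t _ => ((hasDerivAt_gaussShiftedMoment_succ n t).neg.div_const _).congr_deriv
      (by field_simp))
    (fun t _ => (gaussShiftedMoment_pos n t).le)
    (by simpa using ((tendsto_gaussShiftedMoment_atTop (n + 1)).neg.div_const ((n : ℝ) + 1)))
  rw [h]
  ring

lemma itErfc_eq_gaussShiftedMoment (n : ℕ) (x : ℝ) :
    itErfc n x = 2 / √π * (gaussShiftedMoment n x / n !) := by
  induction n generalizing x with
  | zero => simp [itErfc, gaussShiftedMoment]
  | succ n ih =>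
    simp only [itErfc, ih]
    rw [integral_const_mul, integral_div, integral_Ioi_gaussShiftedMoment, Nat.factorial_succ]
    push_cast
    field_simp

lemma itErfc_pos (n : ℕ) (x : ℝ) : 0 < itErfc n x := by
  rw [itErfc_eq_gaussShiftedMoment]
  have := gaussShiftedMoment_pos n x
  positivity

lemma itErfc_recurrence (m : ℕ) (x : ℝ) :
    itErfc m x = 2 * (m + 2) * itErfc (m + 2) x + 2 * x * itErfc (m + 1) x := by
  have h := gaussShiftedMoment_recurrence m x
  simp only [itErfc_eq_gaussShiftedMoment, Nat.factorial_succ]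
  push_cast
  field_simp
  linear_combination (m + 2) * h

lemma itErfc_sq_lt (m : ℕ) (x : ℝ) :
    (m + 1) * itErfc (m + 1) x ^ 2 < (m + 2) * (itErfc m x * itErfc (m + 2) x) := by
  have h := gaussShiftedMoment_sq_lt m x
  simp only [itErfc_eq_gaussShiftedMoment, Nat.factorial_succ]
  push_cast
  set K := (2 / √π) ^ 2 / ((m + 1) * (m ! : ℝ) ^ 2) with hK
  calc _ = K * gaussShiftedMoment (m + 1) x ^ 2 := by
        rw [hK]
        field_simp
    _ < K * (gaussShiftedMoment m x * gaussShiftedMoment (m + 2) x) := by gcongr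
    _ = _ := by
        rw [hK]
        field_simp
        ring

lemma add_sqrt_two_mul_add_sq_pos {N : ℝ} (hN : 0 < N) (x : ℝ) : 0 < x + √(2 * N + x ^ 2) := by
  have hs := sq_sqrt (by positivity : 0 ≤ 2 * N + x ^ 2)
  nlinarith [sqrt_nonneg (2 * N + x ^ 2)]

lemma two_mul_div_add_sqrt {N : ℝ} (hN : 0 < N) (x : ℝ) :
    2 * N / (x + √(2 * N + x ^ 2)) = √(2 * N + x ^ 2) - x := by
  have hs := sq_sqrt (by positivity : 0 ≤ 2 * N + x ^ 2)
  rw [div_eq_iff (add_sqrt_two_mul_add_sq_pos hN x).ne']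
  linear_combination -hs

lemma lt_one_div_add_sqrt_of_quadratic_lt {N x ρ : ℝ} (hN : 0 < N)
    (h : 2 * N * ρ ^ 2 + 2 * x * ρ < 1) :
    ρ < 1 / (x + √(2 * N + x ^ 2)) := by
  have hpos := add_sqrt_two_mul_add_sq_pos hN x
  have hs := sq_sqrt (by positivity : 0 ≤ 2 * N + x ^ 2)
  set s := √(2 * N + x ^ 2)
  rw [lt_div_iff₀ hpos]
  by_contra! hge
  have hρ : 0 < ρ := pos_of_mul_pos_left (one_pos.trans_le hge) hpos.le
  have hsx : 0 < s - x := by nlinarith [sqrt_nonneg (2 * N + x ^ 2)]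
  nlinarith [mul_nonneg (by positivity : 0 ≤ ρ * (s - x) + 1) (sub_nonneg.2 hge)]

lemma itErfc_succ_div_lt (m : ℕ) (x : ℝ) :
    itErfc (m + 1) x / itErfc m x < 1 / (x + √(2 * ((m : ℝ) + 1) + x ^ 2)) := by
  refine lt_one_div_add_sqrt_of_quadratic_lt (by positivity) ?_
  have h0 := itErfc_pos m x
  have hgap : 0 < (m + 2) * (itErfc m x * itErfc (m + 2) x) - (m + 1) * itErfc (m + 1) x ^ 2 :=
    sub_pos.2 (itErfc_sq_lt m x)
  have hquad : 2 * ((m : ℝ) + 1) * (itErfc (m + 1) x / itErfc m x) ^ 2 +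
      2 * x * (itErfc (m + 1) x / itErfc m x) =
      1 - 2 * ((m + 2) * (itErfc m x * itErfc (m + 2) x) - (m + 1) * itErfc (m + 1) x ^ 2) /
        itErfc m x ^ 2 := by
    field_simp
    linear_combination -itErfc m x * itErfc_recurrence m x
  rw [hquad]
  linarith [div_pos (mul_pos two_pos hgap) (pow_pos h0 2)]

lemma one_div_add_sqrt_lt_itErfc_succ_div (m : ℕ) (x : ℝ) :
    1 / (x + √(2 * ((m : ℝ) + 1 + 1) + x ^ 2)) < itErfc (m + 1) x / itErfc m x := by
  have hN : (0 : ℝ) < m + 1 + 1 := by positivity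
  have h1 := itErfc_pos (m + 1) x
  have hup := itErfc_succ_div_lt (m + 1) x
  push_cast at hup
  have hinv : itErfc m x / itErfc (m + 1) x < x + √(2 * ((m : ℝ) + 1 + 1) + x ^ 2) :=
    calc itErfc m x / itErfc (m + 1) x
        = 2 * (m + 1 + 1) * (itErfc (m + 2) x / itErfc (m + 1) x) + 2 * x := by
          rw [itErfc_recurrence m x]
          field_simp
          ring
      _ < 2 * (m + 1 + 1) * (1 / (x + √(2 * ((m : ℝ) + 1 + 1) + x ^ 2))) + 2 * x := by gcongr
      _ = x + √(2 * ((m : ℝ) + 1 + 1) + x ^ 2) := by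
          rw [mul_one_div, two_mul_div_add_sqrt hN]
          ring
  rw [← one_div_div (itErfc m x)]
  exact one_div_lt_one_div_of_lt (div_pos (itErfc_pos m x) h1) hinv

theorem itErfc_ratio_bounds_general (n : ℕ) (hn : 1 ≤ n) (x : ℝ) :
    1 / (x + Real.sqrt (2 * ((n : ℝ) + 1) + x ^ 2)) <
      itErfc n x / itErfc (n - 1) x ∧
    itErfc n x / itErfc (n - 1) x <
      1 / (x + Real.sqrt (2 * (n : ℝ) + x ^ 2)) := by
  obtain ⟨m, rfl⟩ := Nat.exists_eq_add_of_le' hn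
  rw [Nat.add_sub_cancel]
  push_cast
  exact ⟨one_div_add_sqrt_lt_itErfc_succ_div m x, itErfc_succ_div_lt m x⟩

/-- For `n ≥ 1` and `x ≥ 0`,
`1/(x + √(2(n+1) + x²)) < iⁿerfc(x)/iⁿ⁻¹erfc(x) < 1/(x + √(2n + x²))`. -/
theorem itErfc_ratio_bounds (n : ℕ) (hn : 1 ≤ n) (x : ℝ) (hx : 0 ≤ x) :
    1 / (x + Real.sqrt (2 * ((n : ℝ) + 1) + x ^ 2)) <
      itErfc n x / itErfc (n - 1) x ∧
    itErfc n x / itErfc (n - 1) x <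
      1 / (x + Real.sqrt (2 * (n : ℝ) + x ^ 2)) :=
  itErfc_ratio_bounds_general n hn x
end

section
/- For every integer k ≥ 0 and all x > 0, the Hermite polynomial of even degree 2k evaluated at ix satisfies -i·H_{2k+1}(ix)/H_{2k}(ix) < x + sqrt(4k + 2 + x²), and for k ≥ 1, i·H_{2k-1}(ix)/H_{2k}(ix) < 1/(x + sqrt(4k - 2 + x²)); here both left-hand sides are real and positive. -/
open Complex

/-- The physicists' Hermite polynomials (as functions on `ℂ`):
`H₀ = 1`, `H₁(z) = 2z`, `H_{n+2}(z) = 2z H_{n+1}(z) - 2(n+1) H_n(z)`. -/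
noncomputable def physHermite : ℕ → ℂ → ℂ
  | 0, _ => 1
  | 1, z => 2 * z
  | n + 2, z => 2 * z * physHermite (n + 1) z - 2 * ((n : ℂ) + 1) * physHermite n z

/-- The real sequence `g_n(x) = (-i)^n H_n(ix)`, satisfying
`g_0 = 1`, `g_1 = 2x`, `g_{n+2} = 2x g_{n+1} + 2(n+1) g_n`. -/
noncomputable def gherm (x : ℝ) : ℕ → ℝ
  | 0 => 1
  | 1 => 2 * x
  | n + 2 => 2 * x * gherm x (n + 1) + 2 * ((n : ℝ) + 1) * gherm x n

lemma gherm_two_step (x : ℝ) (n : ℕ) :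
    gherm x (n + 2) = 2 * x * gherm x (n + 1) + 2 * ((n : ℝ) + 1) * gherm x n := rfl

lemma physHermite_two_step (z : ℂ) (n : ℕ) :
    physHermite (n + 2) z
      = 2 * z * physHermite (n + 1) z - 2 * ((n : ℂ) + 1) * physHermite n z := rfl

lemma gherm_pos {x : ℝ} (hx : 0 < x) : ∀ n, 0 < gherm x n := by
  have h : ∀ n, 0 < gherm x n ∧ 0 < gherm x (n + 1) := by
    intro n
    induction n with
    | zero =>
      constructor
      · show (0:ℝ) < 1; norm_num
      · show (0:ℝ) < 2 * x; linarith
    | succ m ih =>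
      refine ⟨ih.2, ?_⟩
      rw [gherm_two_step]
      have h1 : (0:ℝ) ≤ (m:ℝ) := Nat.cast_nonneg m
      nlinarith [ih.1, ih.2]
  exact fun n => (h n).1

lemma physHermite_eq_gherm (x : ℝ) (n : ℕ) :
    physHermite n (Complex.I * x) = Complex.I ^ n * (gherm x n : ℂ) := by
  have h : ∀ n, physHermite n (Complex.I * x) = Complex.I ^ n * (gherm x n : ℂ) ∧
      physHermite (n+1) (Complex.I * x) = Complex.I ^ (n+1) * (gherm x (n+1) : ℂ) := by
    intro n
    induction n with
    | zero =>
      constructor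
      · show (1:ℂ) = Complex.I ^ 0 * ((1:ℝ) : ℂ); simp
      · show 2 * (Complex.I * (x:ℂ)) = Complex.I ^ 1 * ((2*x : ℝ) : ℂ)
        push_cast; ring
    | succ m ih =>
      refine ⟨ih.2, ?_⟩
      rw [physHermite_two_step, ih.1, ih.2, gherm_two_step]
      have hI : Complex.I ^ (m+1+1) = -(Complex.I ^ m) := by
        rw [pow_succ, pow_succ, mul_assoc, Complex.I_mul_I]; ring
      rw [hI, pow_succ]
      push_cast
      linear_combination (2*(x:ℂ)*Complex.I^m*((gherm x (m+1) : ℝ) : ℂ)) * Complex.I_mul_I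
  exact (h n).1

/-- Generic step: from `B < (x+T) A` deduce `(x+T) B < C`,
where `T = √(c + x²)` and `C = 2x B + c A`. -/
lemma lb1 {x T c A B C : ℝ} (hx : 0 < x) (hT : 0 < T) (hA : 0 < A) (hB : 0 < B)
    (hc : 0 < c) (hT2 : T^2 = c + x^2) (h1 : B < (x+T)*A) (hC : C = 2*x*B + c*A) :
    (x+T)*B < C := by
  have hxT : 0 < x + T := by linarith
  have h2 : (x+T)*((x+T)*B) < (x+T)*C := by
    rw [hC]
    nlinarith [mul_pos hc (sub_pos.mpr h1), hT2, hB]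
  exact lt_of_mul_lt_mul_left h2 hxT.le

set_option maxHeartbeats 1600000 in
lemma gherm_key {x : ℝ} (hx : 0 < x) : ∀ k : ℕ,
    gherm x (2*k+1) < (x + Real.sqrt (4*(k:ℝ)+2+x^2)) * gherm x (2*k) ∧
    gherm x (2*k+1) ≤ ((4*(k:ℝ)+2)*x) * gherm x (2*k) := by
  intro k
  induction k with
  | zero =>
    have h0 : gherm x 0 = 1 := rfl
    have h1 : gherm x 1 = 2 * x := rfl
    have hs : x < Real.sqrt (2 + x^2) := by
      rw [show (2 + x^2 : ℝ) = x^2 + 2 by ring]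
      exact (Real.lt_sqrt hx.le).mpr (by nlinarith)
    refine ⟨?_, ?_⟩ <;> norm_num [h0, h1] <;> linarith [hs]
  | succ k ih =>
    obtain ⟨ih1, ih2⟩ := ih
    have hK : (0:ℝ) ≤ (k:ℝ) := Nat.cast_nonneg k
    have hA : 0 < gherm x (2*k) := gherm_pos hx _
    have hB : 0 < gherm x (2*k+1) := gherm_pos hx _
    have hCpos : 0 < gherm x (2*k+2) := gherm_pos hx _
    have hC : gherm x (2*k+2)
        = 2*x*(gherm x (2*k+1)) + (4*(k:ℝ)+2)*(gherm x (2*k)) := by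
      rw [gherm_two_step x (2*k)]; push_cast; ring
    have hD : gherm x (2*k+3)
        = 2*x*(gherm x (2*k+2)) + (4*(k:ℝ)+4)*(gherm x (2*k+1)) := by
      rw [show 2*k+3 = (2*k+1)+2 by omega, gherm_two_step x (2*k+1)]; push_cast; ring
    have hargT : (0:ℝ) < 4*(k:ℝ)+2+x^2 := by positivity
    have hargU : (0:ℝ) < 4*(k:ℝ)+6+x^2 := by positivity
    have hT2 : (Real.sqrt (4*(k:ℝ)+2+x^2))^2 = 4*(k:ℝ)+2+x^2 := Real.sq_sqrt hargT.le
    have hU2 : (Real.sqrt (4*(k:ℝ)+6+x^2))^2 = 4*(k:ℝ)+6+x^2 := Real.sq_sqrt hargU.le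
    have hT0 : 0 < Real.sqrt (4*(k:ℝ)+2+x^2) := Real.sqrt_pos.mpr hargT
    have hU0 : 0 < Real.sqrt (4*(k:ℝ)+6+x^2) := Real.sqrt_pos.mpr hargU
    set T := Real.sqrt (4*(k:ℝ)+2+x^2)
    set U := Real.sqrt (4*(k:ℝ)+6+x^2)
    set A := gherm x (2*k)
    set B := gherm x (2*k+1)
    set C := gherm x (2*k+2)
    set D := gherm x (2*k+3)
    have hTU : T < U := by nlinarith
    have hUx : x < U := by nlinarith
    -- lower bounds on C
    have LB1 : (x+T)*B < C := lb1 hx hT0 hA hB (by nlinarith) hT2 ih1 hC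
    have LB2 : 2*x^2*B + B ≤ x*C := by
      rw [hC]
      nlinarith [ih2]
    have hBxC : B ≤ x*C := by nlinarith [LB2, sq_nonneg x, hB.le]
    -- the key strict bound
    have hgB : (4*(k:ℝ)+4)*B < (U-x)*C := by
      by_cases hcase : 2 < x*(T+U)
      · -- large x: use LB1
        have hm2 : U - T < 2*x := by nlinarith [mul_pos (add_pos hT0 hU0) hx]
        have q1 : 4*(k:ℝ)+4 < (x+T)*(U-x) := by
          nlinarith [mul_pos (show (0:ℝ) < U - T by linarith)
            (show (0:ℝ) < 2*x - (U - T) by linarith), hT2, hU2]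
        have p1 : (4*(k:ℝ)+4)*((x+T)*B) < (4*(k:ℝ)+4)*C :=
          mul_lt_mul_of_pos_left LB1 (by nlinarith)
        have p2 : (4*(k:ℝ)+4)*C < ((x+T)*(U-x))*C := mul_lt_mul_of_pos_right q1 hCpos
        have h5 : (x+T)*((4*(k:ℝ)+4)*B) < (x+T)*((U-x)*C) := by nlinarith [p1, p2, hCpos, hB]
        exact lt_of_mul_lt_mul_left h5 (by linarith)
      · -- small x: use LB2
        have hcase' : x*(T+U) ≤ 2 := le_of_not_gt hcase
        have hsq : (x*(T+U))^2 ≤ 4 := by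
          nlinarith [hcase', mul_nonneg hx.le (by linarith : (0:ℝ) ≤ T+U)]
        have hx2T2 : x^2*T^2 = x^2*(4*(k:ℝ)+2+x^2) := by rw [hT2]
        have hx2U2 : x^2*U^2 = x^2*(4*(k:ℝ)+6+x^2) := by rw [hU2]
        have hTUx2 : x^2*T^2 ≤ x^2*(T*U) := by
          have h9 : T^2 ≤ T*U := by nlinarith
          exact mul_le_mul_of_nonneg_left h9 (sq_nonneg x)
        have hx2 : 0 < x^2 := by positivity
        have hy : (4*(k:ℝ)+2)*x^2 < 1 := by
          nlinarith [hsq, hx2T2, hx2U2, hTUx2, hx2, sq_nonneg (x^2)]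
        have q2 : (4*(k:ℝ)+4)*x < (U-x)*(2*x^2+1) := by
          have h6 : (x*(4*(k:ℝ)+5+2*x^2))^2 < (U*(2*x^2+1))^2 := by
            nlinarith [hU2, mul_pos (show (0:ℝ) < 4*(k:ℝ)+6 by linarith)
              (show (0:ℝ) < 1 - (4*(k:ℝ)+2)*x^2 by linarith),
              sq_nonneg (x^2), mul_nonneg hK (sq_nonneg x),
              mul_nonneg (mul_nonneg hK hK) (sq_nonneg x)]
          have h7 : x*(4*(k:ℝ)+5+2*x^2) < U*(2*x^2+1) := by
            refine lt_of_pow_lt_pow_left₀ 2 ?_ h6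
            positivity
          nlinarith [h7]
        have p3 : (U-x)*(2*x^2*B + B) ≤ (U-x)*(x*C) :=
          mul_le_mul_of_nonneg_left LB2 (by linarith)
        have p4 : ((4*(k:ℝ)+4)*x)*B < ((U-x)*(2*x^2+1))*B := mul_lt_mul_of_pos_right q2 hB
        have h8 : x*((4*(k:ℝ)+4)*B) < x*((U-x)*C) := by nlinarith [p3, p4, hB]
        exact lt_of_mul_lt_mul_left h8 hx.le
    have e1 : 2*(k+1)+1 = 2*k+3 := by omega
    have e2 : 2*(k+1) = 2*k+2 := by omega
    have e3 : (4*((k+1 : ℕ):ℝ)+2+x^2) = 4*(k:ℝ)+6+x^2 := by push_cast; ring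
    rw [e1, e2, e3]
    constructor
    · -- first invariant at k+1
      show D < (x + U) * C
      rw [hD]
      linarith [hgB]
    · -- second invariant at k+1
      have e4 : ((4*((k+1 : ℕ):ℝ)+2)*x) = (4*(k:ℝ)+6)*x := by push_cast; ring
      rw [e4]
      show D ≤ ((4*(k:ℝ)+6)*x) * C
      rw [hD]
      nlinarith [mul_le_mul_of_nonneg_left hBxC (show (0:ℝ) ≤ 4*(k:ℝ)+4 by linarith)]

/-- For `k ≥ 0` and `x > 0`, the real positive quantity
`-i H_{2k+1}(ix)/H_{2k}(ix)` is `< x + √(4k+2+x²)`, and for `k ≥ 1` the real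
positive quantity `i H_{2k-1}(ix)/H_{2k}(ix)` is `< 1/(x + √(4k-2+x²))`. -/
theorem hermite_imaginary_ratio_bounds (k : ℕ) (x : ℝ) (hx : 0 < x) :
    (∃ r : ℝ, -Complex.I * physHermite (2 * k + 1) (Complex.I * x) /
        physHermite (2 * k) (Complex.I * x) = (r : ℂ) ∧ 0 < r ∧
        r < x + Real.sqrt (4 * (k : ℝ) + 2 + x ^ 2)) ∧
    (1 ≤ k →
      ∃ r : ℝ, Complex.I * physHermite (2 * k - 1) (Complex.I * x) /
        physHermite (2 * k) (Complex.I * x) = (r : ℂ) ∧ 0 < r ∧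
        r < 1 / (x + Real.sqrt (4 * (k : ℝ) - 2 + x ^ 2))) := by
  have hA : 0 < gherm x (2*k) := gherm_pos hx _
  constructor
  · refine ⟨gherm x (2*k+1) / gherm x (2*k), ?_, ?_, ?_⟩
    · rw [physHermite_eq_gherm, physHermite_eq_gherm]
      have hw : (Complex.I)^(2*k) ≠ 0 := pow_ne_zero _ I_ne_zero
      have hnum : -Complex.I * (Complex.I^(2*k+1) * ((gherm x (2*k+1) : ℝ) : ℂ))
          = Complex.I^(2*k) * ((gherm x (2*k+1) : ℝ) : ℂ) := by
        rw [pow_succ]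
        linear_combination (-(Complex.I^(2*k)) * ((gherm x (2*k+1) : ℝ) : ℂ)) *
          Complex.I_mul_I
      rw [hnum, mul_div_mul_left _ _ hw]
      push_cast
      ring
    · exact div_pos (gherm_pos hx _) hA
    · rw [div_lt_iff₀ hA]
      exact (gherm_key hx k).1
  · intro hk
    obtain ⟨m, rfl⟩ : ∃ m, k = m + 1 := ⟨k - 1, by omega⟩
    have hidx1 : 2*(m+1) - 1 = 2*m+1 := by omega
    have hidx2 : 2*(m+1) = 2*m+2 := by omega
    have hA2 : 0 < gherm x (2*m+2) := gherm_pos hx _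
    have hB2 : 0 < gherm x (2*m+1) := gherm_pos hx _
    have hargS : (0:ℝ) < 4*(m:ℝ)+2+x^2 := by positivity
    have hS2 : (Real.sqrt (4*(m:ℝ)+2+x^2))^2 = 4*(m:ℝ)+2+x^2 := Real.sq_sqrt hargS.le
    have hS0 : 0 < Real.sqrt (4*(m:ℝ)+2+x^2) := Real.sqrt_pos.mpr hargS
    have hCrec : gherm x (2*m+2)
        = 2*x*(gherm x (2*m+1)) + (4*(m:ℝ)+2)*(gherm x (2*m)) := by
      rw [gherm_two_step x (2*m)]; push_cast; ring
    have LB1 : (x + Real.sqrt (4*(m:ℝ)+2+x^2))*(gherm x (2*m+1)) < gherm x (2*m+2) :=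
      lb1 hx hS0 (gherm_pos hx _) hB2 (by positivity) hS2 (gherm_key hx m).1 hCrec
    refine ⟨gherm x (2*m+1) / gherm x (2*m+2), ?_, ?_, ?_⟩
    · rw [hidx1, hidx2, physHermite_eq_gherm, physHermite_eq_gherm]
      have hw : (Complex.I)^(2*m+2) ≠ 0 := pow_ne_zero _ I_ne_zero
      have hnum : Complex.I * (Complex.I^(2*m+1) * ((gherm x (2*m+1) : ℝ) : ℂ))
          = Complex.I^(2*m+2) * ((gherm x (2*m+1) : ℝ) : ℂ) := by
        rw [pow_succ]
        ring
      rw [hnum, mul_div_mul_left _ _ hw]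
      push_cast
      ring
    · exact div_pos hB2 hA2
    · have harg : (4 * ((m+1 : ℕ):ℝ) - 2 + x ^ 2) = 4*(m:ℝ)+2+x^2 := by push_cast; ring
      rw [harg, div_lt_div_iff₀ hA2 (by linarith)]
      linarith [LB1]
end

section
/- For any x > 0 and real n > m > 0, the second-kind Legendre function at imaginary argument satisfies 0 < i·Qₙᵐ(ix)/Q_{n-1}ᵐ(ix) < ((n+m)/n)·(x + sqrt(1 + x² - m²/n²))^{-1} < sqrt((n+m)/(n-m)). -/
/-!
Write `f = Qₙᵐ(i·)`, `g = Qₙ₋₁ᵐ(i·)`, `w = f ḡ` and `E = (n - m)|f|² + (n + m)|g|²`. The system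
gives `(1 + x²) w' = i E`, so `Re w` is constant and `Im w` increases. The Lyapunov function
`(n + m)|g|² - (n - m)|f|²` has derivative `-2nxE / (1 + x²)`; it cannot stay above any `ε > 0`
(it would decrease like `-nε log x`), so `g → 0` along with `f`. Hence `w → 0`, which forces
`Re w = 0` and `Im w < 0`: the ratio `r = i f / g = -Im w / |g|²` is real and positive.
Moreover `x Im w → 0`, so `F = (n - m)|f|² - (n + m)|g|² - 2nx Im w`, which increases since
`F' = -2n Im w`, is negative. Divided by `|g|²` this says `(n - m)r² + 2nxr - (n + m) < 0`,
i.e. `r` lies below the positive root of this quadratic, which is the middle term of the bound.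
-/

open Filter Complex ComplexConjugate Set Topology

section Ici

variable {φ φ' : ℝ → ℝ} {a : ℝ}

theorem monotoneOn_Ici_of_hasDerivAt_nonneg (hφ : ∀ y, a ≤ y → HasDerivAt φ (φ' y) y)
    (hφ' : ∀ y, a < y → 0 ≤ φ' y) : MonotoneOn φ (Ici a) :=
  monotoneOn_of_hasDerivWithinAt_nonneg (convex_Ici a)
    (fun y hy => (hφ y hy).continuousAt.continuousWithinAt)
    (fun y hy => by
      rw [interior_Ici] at hy ⊢
      exact (hφ y hy.le).hasDerivWithinAt)
    (fun y hy => hφ' y (by simpa using hy))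

theorem strictMonoOn_Ici_of_hasDerivAt_pos (hφ : ∀ y, a ≤ y → HasDerivAt φ (φ' y) y)
    (hφ' : ∀ y, a < y → 0 < φ' y) : StrictMonoOn φ (Ici a) :=
  strictMonoOn_of_hasDerivWithinAt_pos (convex_Ici a)
    (fun y hy => (hφ y hy).continuousAt.continuousWithinAt)
    (fun y hy => by
      rw [interior_Ici] at hy ⊢
      exact (hφ y hy.le).hasDerivWithinAt)
    (fun y hy => hφ' y (by simpa using hy))

theorem le_of_hasDerivAt_nonneg_of_tendsto {L : ℝ} (hφ : ∀ y, a ≤ y → HasDerivAt φ (φ' y) y)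
    (hφ' : ∀ y, a < y → 0 ≤ φ' y) (hlim : Tendsto φ atTop (𝓝 L)) : φ a ≤ L :=
  ge_of_tendsto hlim <| (eventually_ge_atTop a).mono fun _ hy =>
    monotoneOn_Ici_of_hasDerivAt_nonneg hφ hφ' self_mem_Ici hy hy

theorem lt_of_hasDerivAt_pos_of_tendsto {L : ℝ} (hφ : ∀ y, a ≤ y → HasDerivAt φ (φ' y) y)
    (hφ' : ∀ y, a < y → 0 < φ' y) (hlim : Tendsto φ atTop (𝓝 L)) : φ a < L :=
  calc φ a < φ (a + 1) :=
        strictMonoOn_Ici_of_hasDerivAt_pos hφ hφ' self_mem_Ici (by simp) (by simp)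
    _ ≤ L := le_of_hasDerivAt_nonneg_of_tendsto (fun y hy => hφ y (by linarith))
        (fun y hy => (hφ' y (by linarith)).le) hlim

theorem tendsto_atBot_of_hasDerivAt_le_neg_div {δ : ℝ} (ha : 0 < a) (hδ : 0 < δ)
    (hφ : ∀ y, a ≤ y → HasDerivAt φ (φ' y) y) (hφ' : ∀ y, a ≤ y → φ' y ≤ -(δ / y)) :
    Tendsto φ atTop atBot := by
  have hψ : ∀ y, a ≤ y → HasDerivAt (fun z => -(φ z + δ * Real.log z)) (-(φ' y + δ / y)) y :=
    fun y hy => ((hφ y hy).add ((Real.hasDerivAt_log (by linarith)).const_mul δ)).neg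
      |>.congr_deriv (by field_simp)
  have hmono := monotoneOn_Ici_of_hasDerivAt_nonneg hψ fun y hy => by
    linarith [hφ' y hy.le]
  have hlog : Tendsto (fun y => φ a + δ * Real.log a - δ * Real.log y) atTop atBot :=
    tendsto_atBot_add_const_left _ _ <| tendsto_neg_atTop_atBot.comp <|
      Real.tendsto_log_atTop.const_mul_atTop hδ
  refine tendsto_atBot_mono' _ ?_ hlog
  filter_upwards [eventually_ge_atTop a] with y hy
  have := hmono self_mem_Ici hy hy
  simp only at this
  linarith

end Ici

/-- `c / (b + √(b² + ac))` is the positive root of `a r² + 2 b r - c`. -/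
theorem lt_div_add_sqrt_of_quadratic_neg {a b c r : ℝ} (ha : 0 < a) (hc : 0 < c)
    (h : a * r ^ 2 + 2 * b * r - c < 0) : r < c / (b + √(b ^ 2 + a * c)) := by
  set s := √(b ^ 2 + a * c)
  have hs : s ^ 2 = b ^ 2 + a * c := Real.sq_sqrt (by nlinarith [sq_nonneg b])
  have hbs : 0 < b + s := by
    have : |b| < s := by
      rw [← Real.sqrt_sq_eq_abs]; exact Real.sqrt_lt_sqrt (sq_nonneg b) (by nlinarith)
    linarith [neg_abs_le b]
  set ρ := c / (b + s)
  have hρ : ρ * (b + s) = c := div_mul_cancel₀ c hbs.ne'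
  have haρ : a * ρ + b = s := by
    apply mul_right_cancel₀ hbs.ne'
    linear_combination a * hρ - hs
  by_contra! hle
  have hfactor : 0 ≤ a * (r + ρ) + 2 * b := by
    nlinarith [mul_nonneg ha.le (sub_nonneg.2 hle), Real.sqrt_nonneg (b ^ 2 + a * c)]
  nlinarith [mul_nonneg (sub_nonneg.2 hle) hfactor]

theorem div_add_sqrt_lt_sqrt_div {a b c : ℝ} (ha : 0 < a) (hb : 0 < b) (hc : 0 < c) :
    c / (b + √(b ^ 2 + a * c)) < √(c / a) := by
  have hac : √(c / a) = c / √(a * c) := by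
    rw [eq_div_iff (by positivity), ← Real.sqrt_mul (by positivity),
      show c / a * (a * c) = c ^ 2 by field_simp, Real.sqrt_sq hc.le]
  rw [hac]
  apply div_lt_div_of_pos_left hc (by positivity)
  have := Real.sqrt_le_sqrt (by nlinarith : a * c ≤ b ^ 2 + a * c)
  linarith

theorem HasDerivAt.complex_re {w : ℝ → ℂ} {w' : ℂ} {x : ℝ} (h : HasDerivAt w w' x) :
    HasDerivAt (fun y => (w y).re) w'.re x :=
  reCLM.hasFDerivAt.comp_hasDerivAt x h

theorem HasDerivAt.complex_im {w : ℝ → ℂ} {w' : ℂ} {x : ℝ} (h : HasDerivAt w w' x) :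
    HasDerivAt (fun y => (w y).im) w'.im x :=
  imCLM.hasFDerivAt.comp_hasDerivAt x h

theorem one_add_ofReal_sq_ne_zero (x : ℝ) : (1 : ℂ) + (x : ℂ) ^ 2 ≠ 0 := by
  exact_mod_cast (by positivity : (1 : ℝ) + x ^ 2 ≠ 0)

theorem tendsto_normSq_zero_iff {α : Type*} {l : Filter α} {g : α → ℂ} :
    Tendsto (fun y => normSq (g y)) l (𝓝 0) ↔ Tendsto g l (𝓝 0) := by
  simp_rw [tendsto_zero_iff_norm_tendsto_zero (f := g), normSq_eq_norm_sq]
  exact ⟨fun h => by simpa using h.sqrt, fun h => by simpa using h.pow 2⟩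

theorem I_mul_div_eq_neg_im_div_normSq {a b : ℂ} (h : (a * conj b).re = 0) :
    I * a / b = ((-(a * conj b).im / normSq b : ℝ) : ℂ) := by
  rcases eq_or_ne b 0 with rfl | hb
  · simp
  obtain ⟨t, ht⟩ : ∃ t : ℝ, a * conj b = t * I :=
    ⟨(a * conj b).im, Complex.ext (by simp [h]) (by simp)⟩
  calc I * a / b = I * (a * conj b) / (b * conj b) := by
        rw [← mul_assoc, mul_div_mul_right _ _ ((map_ne_zero _).2 hb)]
    _ = _ := by
        rw [ht, mul_conj]
        push_cast
        simp only [mul_im, ofReal_re, ofReal_im, I_re, I_im]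
        ring_nf
        rw [I_sq]
        ring

/-- The difference-differential system satisfied by `f = Qₙᵐ(i·)` and `g = Qₙ₋₁ᵐ(i·)`. -/
def IsOblateLegendrePair (m n : ℝ) (f g : ℝ → ℂ) : Prop :=
  ∀ x : ℝ, 0 < x →
    HasDerivAt f
      (((n : ℂ) * (x : ℂ) * f x + I * ((n : ℂ) + (m : ℂ)) * g x) / (1 + (x : ℂ) ^ 2)) x ∧
    HasDerivAt g
      ((-((n : ℂ) * (x : ℂ)) * g x - I * ((n : ℂ) - (m : ℂ)) * f x) / (1 + (x : ℂ) ^ 2)) x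

namespace IsOblateLegendrePair

def energy (m n : ℝ) (f g : ℝ → ℂ) (y : ℝ) : ℝ :=
  (n - m) * normSq (f y) + (n + m) * normSq (g y)

variable {m n : ℝ} {f g : ℝ → ℂ} {x : ℝ}

theorem hasDerivAt_mul_conj (h : IsOblateLegendrePair m n f g) (hx : 0 < x) :
    HasDerivAt (fun y => f y * conj (g y)) (I * ((energy m n f g x / (1 + x ^ 2) : ℝ) : ℂ)) x := by
  obtain ⟨hf, hg⟩ := h x hx
  refine (hf.mul hg.star).congr_deriv ?_
  have := one_add_ofReal_sq_ne_zero x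
  simp only [energy, RCLike.star_def, map_div₀, map_sub, map_neg, map_mul, map_add, map_one,
    map_pow, conj_I, conj_ofReal]
  push_cast
  rw [← mul_conj, ← mul_conj]
  field_simp
  ring

theorem hasDerivAt_lyapunov (h : IsOblateLegendrePair m n f g) (hx : 0 < x) :
    HasDerivAt (fun y => (n + m) * normSq (g y) - (n - m) * normSq (f y))
      (-(2 * n * x * energy m n f g x / (1 + x ^ 2))) x := by
  obtain ⟨hf, hg⟩ := h x hx
  have hc := (((hg.mul hg.star).const_mul ((n + m : ℝ) : ℂ)).sub
    ((hf.mul hf.star).const_mul ((n - m : ℝ) : ℂ))).complex_re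
  convert hc using 1
  · funext y; simp [RCLike.star_def, mul_conj]
  · have := one_add_ofReal_sq_ne_zero x
    rw [← ofReal_re (-(_ / _))]
    congr 1
    simp only [energy, RCLike.star_def, map_div₀, map_sub, map_neg, map_mul, map_add, map_one,
      map_pow, conj_I, conj_ofReal]
    push_cast
    rw [← mul_conj, ← mul_conj]
    field_simp
    ring

theorem energy_nonneg (hmn : |m| < n) (y : ℝ) : 0 ≤ energy m n f g y := by
  have := abs_lt.1 hmn
  unfold energy
  nlinarith [normSq_nonneg (f y), normSq_nonneg (g y)]

theorem tendsto_zero_right (h : IsOblateLegendrePair m n f g) (hmn : |m| < n)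
    (hf0 : Tendsto f atTop (𝓝 0)) : Tendsto g atTop (𝓝 0) := by
  obtain ⟨hnm, hnm'⟩ : 0 < n - m ∧ 0 < n + m := by constructor <;> linarith [abs_lt.1 hmn]
  have hn : 0 < n := by linarith
  set W := fun y => (n + m) * normSq (g y) - (n - m) * normSq (f y) with hW
  have hW_le : ∀ y, W y ≤ energy m n f g y := fun y => by
    simp only [hW, energy]; nlinarith [normSq_nonneg (f y)]
  have hW_anti : ∀ x, 0 < x → AntitoneOn W (Ici x) := fun x hx => by
    have := monotoneOn_Ici_of_hasDerivAt_nonneg (φ := fun y => -W y)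
      (fun y hy => (h.hasDerivAt_lyapunov (hx.trans_le hy)).neg) fun y hy => by
        rw [neg_neg]
        have := energy_nonneg (f := f) (g := g) hmn y
        have := hx.trans hy
        positivity
    exact fun a ha b hb hab => neg_le_neg_iff.1 (this ha hb hab)
  -- `W` cannot stay above `ε`: then `W' ≤ -nε / y`, and `W` would diverge like `-nε log y`.
  have h_small : ∀ x ε, 0 < ε → ∃ y, x ≤ y ∧ W y < ε := by
    intro x ε hε
    by_contra! hbig
    have hdiv := tendsto_atBot_of_hasDerivAt_le_neg_div (a := max x 1) (δ := n * ε)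
      (by positivity) (by positivity)
      (fun y hy => h.hasDerivAt_lyapunov (by linarith [le_max_right x 1]))
      fun y hy => by
        have hy1 : 1 ≤ y := (le_max_right x 1).trans hy
        have hE : ε ≤ energy m n f g y := (hbig y ((le_max_left x 1).trans hy)).trans (hW_le y)
        rw [neg_le_neg_iff, div_le_div_iff₀ (by positivity) (by positivity)]
        nlinarith [mul_le_mul_of_nonneg_left hE (by positivity : 0 ≤ 2 * n * y * y),
          mul_nonneg (by positivity : 0 ≤ n * ε) (by nlinarith : 0 ≤ y ^ 2 - 1)]
    obtain ⟨y, hy, hWy⟩ := ((hdiv.eventually_lt_atBot ε).and (eventually_ge_atTop x)).exists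
    linarith [hbig y hWy]
  rw [← tendsto_normSq_zero_iff]
  suffices Tendsto (fun y => (n + m) * normSq (g y)) atTop (𝓝 0) by
    simpa [hnm'.ne'] using this.const_mul (n + m)⁻¹
  refine tendsto_order.2 ⟨fun a ha => Eventually.of_forall fun y => ?_, fun ε hε => ?_⟩
  · nlinarith [normSq_nonneg (g y)]
  obtain ⟨x₁, hx₁⟩ := ((((tendsto_normSq_zero_iff.2 hf0).const_mul (n - m)).eventually
    (gt_mem_nhds (show (n - m) * 0 < ε / 2 by linarith))).and
    (eventually_gt_atTop 0)).exists_forall_of_atTop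
  obtain ⟨x₂, hx₁₂, hWx₂⟩ := h_small x₁ (ε / 2) (half_pos hε)
  filter_upwards [eventually_ge_atTop x₂] with y hy
  have hWy : W y ≤ W x₂ := hW_anti x₁ (hx₁ x₁ le_rfl).2 hx₁₂ (hx₁₂.trans hy) hy
  have hfy := (hx₁ y (hx₁₂.trans hy)).1
  simp only [hW] at hWy hWx₂ hfy
  linarith

theorem tendsto_energy (hf0 : Tendsto f atTop (𝓝 0)) (hg0 : Tendsto g atTop (𝓝 0)) :
    Tendsto (energy m n f g) atTop (𝓝 0) := by
  have := ((tendsto_normSq_zero_iff.2 hf0).const_mul (n - m)).add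
    ((tendsto_normSq_zero_iff.2 hg0).const_mul (n + m))
  rwa [mul_zero, mul_zero, add_zero] at this

theorem tendsto_mul_conj (hf0 : Tendsto f atTop (𝓝 0)) (hg0 : Tendsto g atTop (𝓝 0)) :
    Tendsto (fun y => f y * conj (g y)) atTop (𝓝 0) := by
  simpa using hf0.mul ((continuous_conj.tendsto 0).comp hg0)

theorem re_mul_conj_eq_zero (h : IsOblateLegendrePair m n f g) (hf0 : Tendsto f atTop (𝓝 0))
    (hg0 : Tendsto g atTop (𝓝 0)) (hx : 0 < x) : (f x * conj (g x)).re = 0 := by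
  have hu : ∀ y, x ≤ y → HasDerivAt (fun y => (f y * conj (g y)).re) 0 y := fun y hy => by
    simpa only [I_mul_re, ofReal_im, neg_zero] using
      (h.hasDerivAt_mul_conj (hx.trans_le hy)).complex_re
  have hlim : Tendsto (fun y => (f y * conj (g y)).re) atTop (𝓝 0) := by
    simpa only [Function.comp_def, zero_re] using
      (continuous_re.tendsto 0).comp (tendsto_mul_conj hf0 hg0)
  apply le_antisymm (le_of_hasDerivAt_nonneg_of_tendsto hu (fun _ _ => le_rfl) hlim)
  simpa only [Pi.neg_apply, neg_zero, neg_nonpos] using le_of_hasDerivAt_nonneg_of_tendsto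
    (fun y hy => (hu y hy).neg) (fun _ _ => neg_zero.ge) hlim.neg

theorem hasDerivAt_im_mul_conj (h : IsOblateLegendrePair m n f g) (hx : 0 < x) :
    HasDerivAt (fun y => (f y * conj (g y)).im) (energy m n f g x / (1 + x ^ 2)) x := by
  simpa only [I_mul_im, ofReal_re] using (h.hasDerivAt_mul_conj hx).complex_im

theorem tendsto_im_mul_conj (hf0 : Tendsto f atTop (𝓝 0)) (hg0 : Tendsto g atTop (𝓝 0)) :
    Tendsto (fun y => (f y * conj (g y)).im) atTop (𝓝 0) := by
  simpa only [Function.comp_def, zero_im] using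
    (continuous_im.tendsto 0).comp (tendsto_mul_conj hf0 hg0)

theorem im_mul_conj_neg (h : IsOblateLegendrePair m n f g) (hmn : |m| < n)
    (hf0 : Tendsto f atTop (𝓝 0)) (hg0 : Tendsto g atTop (𝓝 0))
    (hfne : ∀ y, 0 < y → f y ≠ 0) (hx : 0 < x) : (f x * conj (g x)).im < 0 :=
  lt_of_hasDerivAt_pos_of_tendsto (φ := fun y => (f y * conj (g y)).im)
    (fun y hy => h.hasDerivAt_im_mul_conj (hx.trans_le hy))
    (fun y hy => by
      have hE : 0 < energy m n f g y := by
        have := abs_lt.1 hmn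
        have := normSq_pos.2 (hfne y (hx.trans hy))
        unfold energy
        nlinarith [normSq_nonneg (g y)]
      exact div_pos hE (by positivity))
    (tendsto_im_mul_conj hf0 hg0)

theorem tendsto_mul_im_mul_conj (h : IsOblateLegendrePair m n f g) (hmn : |m| < n)
    (hf0 : Tendsto f atTop (𝓝 0)) (hg0 : Tendsto g atTop (𝓝 0)) :
    Tendsto (fun y => y * (f y * conj (g y)).im) atTop (𝓝 0) := by
  set t := fun y => (f y * conj (g y)).im
  have ht0 : Tendsto t atTop (𝓝 0) := tendsto_im_mul_conj hf0 hg0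
  have ht_nonpos : ∀ y, 0 < y → t y ≤ 0 := fun y hy =>
    le_of_hasDerivAt_nonneg_of_tendsto (fun z hz => h.hasDerivAt_im_mul_conj (hy.trans_le hz))
      (fun z _ => div_nonneg (energy_nonneg hmn z) (by positivity)) ht0
  refine tendsto_order.2 ⟨fun a ha => ?_, fun a ha => ?_⟩
  · obtain ⟨ε, hε, rfl⟩ : ∃ ε, 0 < ε ∧ a = -(2 * ε) := ⟨-a / 2, by linarith, by ring⟩
    obtain ⟨x₀, hx₀⟩ := (((tendsto_energy hf0 hg0).eventually (ge_mem_nhds hε)).and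
      (eventually_gt_atTop 0)).exists_forall_of_atTop
    filter_upwards [eventually_ge_atTop x₀] with x hx
    have hxpos := (hx₀ x hx).2
    -- `t + ε / y` decreases to `0`, because `t' = E / (1 + y²) ≤ ε / y²` once `E ≤ ε`.
    have hdecr := le_of_hasDerivAt_nonneg_of_tendsto (φ := fun y => -(t y + ε * y⁻¹)) (a := x)
      (fun y hy => ((h.hasDerivAt_im_mul_conj (hxpos.trans_le hy)).add
        ((hasDerivAt_inv (hxpos.trans_le hy).ne').const_mul ε)).neg)
      (fun y hy => by
        have hy0 := hxpos.trans hy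
        have hE := (hx₀ y (hx.trans hy.le)).1
        rw [neg_nonneg, mul_neg, ← div_eq_mul_inv, ← sub_eq_add_neg, sub_nonpos]
        exact div_le_div₀ hε.le hE (by positivity) (by linarith))
      (by simpa using (ht0.add (tendsto_inv_atTop_zero.const_mul ε)).neg)
    have hεx : x * (ε * x⁻¹) = ε := by field_simp
    have := mul_nonneg hxpos.le (neg_nonpos.1 hdecr)
    show -(2 * ε) < x * t x
    nlinarith
  · filter_upwards [eventually_gt_atTop 0] with y hy
    nlinarith [ht_nonpos y hy]

theorem quadratic_form_neg (h : IsOblateLegendrePair m n f g) (hmn : |m| < n)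
    (hf0 : Tendsto f atTop (𝓝 0)) (hg0 : Tendsto g atTop (𝓝 0))
    (hfne : ∀ y, 0 < y → f y ≠ 0) (hx : 0 < x) :
    (n - m) * normSq (f x) - (n + m) * normSq (g x) - 2 * n * x * (f x * conj (g x)).im < 0 := by
  have hderiv : ∀ y, x ≤ y → HasDerivAt (fun y => (n - m) * normSq (f y)
      - (n + m) * normSq (g y) - 2 * n * (y * (f y * conj (g y)).im))
      (-(2 * n * (f y * conj (g y)).im)) y := fun y hy => by
    have hy := hx.trans_le hy
    have : (1 : ℝ) + y ^ 2 ≠ 0 := by positivity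
    have hsum := (h.hasDerivAt_lyapunov hy).neg.sub
      (((hasDerivAt_id' y).mul (h.hasDerivAt_im_mul_conj hy)).const_mul (2 * n))
    refine (hsum.congr_deriv (by field_simp; ring)).congr_of_eventuallyEq
      (Eventually.of_forall fun z => by simp only [Pi.neg_apply, Pi.sub_apply, Pi.mul_apply]; ring)
  have hlim : Tendsto (fun y => (n - m) * normSq (f y) - (n + m) * normSq (g y)
      - 2 * n * (y * (f y * conj (g y)).im)) atTop (𝓝 0) := by
    have := ((((tendsto_normSq_zero_iff.2 hf0).const_mul (n - m)).sub
      ((tendsto_normSq_zero_iff.2 hg0).const_mul (n + m))).sub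
      ((tendsto_mul_im_mul_conj h hmn hf0 hg0).const_mul (2 * n)))
    simpa using this
  have := lt_of_hasDerivAt_pos_of_tendsto hderiv (fun y hy => by
    have := h.im_mul_conj_neg hmn hf0 hg0 hfne (hx.trans hy)
    nlinarith [abs_nonneg m]) hlim
  linarith

theorem exists_ratio_quadratic_neg (h : IsOblateLegendrePair m n f g) (hmn : |m| < n)
    (hf0 : Tendsto f atTop (𝓝 0)) (hg0 : Tendsto g atTop (𝓝 0))
    (hfne : ∀ y, 0 < y → f y ≠ 0) (hx : 0 < x) :
    ∃ r : ℝ, I * f x / g x = r ∧ 0 < r ∧ (n - m) * r ^ 2 + 2 * n * x * r - (n + m) < 0 := by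
  have hre := h.re_mul_conj_eq_zero hf0 hg0 hx
  have him := h.im_mul_conj_neg hmn hf0 hg0 hfne hx
  have hF := h.quadratic_form_neg hmn hf0 hg0 hfne hx
  set t := (f x * conj (g x)).im
  have hG : 0 < normSq (g x) := normSq_pos.2 fun hg => by simp [t, hg] at him
  have hprod : normSq (f x) * normSq (g x) = t ^ 2 := by
    rw [← normSq_conj (g x), ← map_mul, normSq_apply, hre]
    ring
  refine ⟨-t / normSq (g x), I_mul_div_eq_neg_im_div_normSq hre, div_pos (neg_pos.2 him) hG, ?_⟩
  have hquad : (n - m) * (-t / normSq (g x)) ^ 2 + 2 * n * x * (-t / normSq (g x)) - (n + m) =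
      ((n - m) * normSq (f x) - (n + m) * normSq (g x) - 2 * n * x * t) / normSq (g x) := by
    field_simp
    linear_combination (m - n) * hprod
  rw [hquad]
  exact div_neg_of_neg_of_pos hF hG

end IsOblateLegendrePair

/-- Let `Q n x` denote the associated Legendre function of
the second kind `Qₙᵐ` evaluated at `ix` (`x > 0`), for real degree `n` and
fixed real order `m > 0`. The family is characterized by the
difference-differential system (DLMF 14.10.4–5 at imaginary argument)
`(1+x²) (d/dx)Qₙᵐ(ix) = n x Qₙᵐ(ix) + i (n+m) Qₙ₋₁ᵐ(ix)`,
`(1+x²) (d/dx)Qₙ₋₁ᵐ(ix) = -n x Qₙ₋₁ᵐ(ix) - i (n-m) Qₙᵐ(ix)`,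
together with being the recessive (decaying, nonvanishing) solution as
`x → +∞`. Then for `n > m` and `x > 0`:
`0 < i Qₙᵐ(ix)/Qₙ₋₁ᵐ(ix) < ((n+m)/n) (x + √(1+x²-m²/n²))⁻¹ < √((n+m)/(n-m))`. -/
theorem oblate_legendre_Q_ratio_bounds (m : ℝ) (hm : 0 < m) (Q : ℝ → ℝ → ℂ)
    (hsys1 : ∀ n x : ℝ, m < n → 0 < x →
      HasDerivAt (Q n)
        (((n : ℂ) * (x : ℂ) * Q n x + Complex.I * ((n : ℂ) + (m : ℂ)) * Q (n - 1) x) /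
          (1 + (x : ℂ) ^ 2)) x)
    (hsys2 : ∀ n x : ℝ, m < n → 0 < x →
      HasDerivAt (Q (n - 1))
        ((-((n : ℂ) * (x : ℂ)) * Q (n - 1) x - Complex.I * ((n : ℂ) - (m : ℂ)) * Q n x) /
          (1 + (x : ℂ) ^ 2)) x)
    (hdecay : ∀ n : ℝ, m < n → Tendsto (Q n) atTop (nhds 0))
    (hne : ∀ n x : ℝ, m < n → 0 < x → Q n x ≠ 0) :
    ∀ n x : ℝ, m < n → 0 < x →
      ∃ r : ℝ, Complex.I * Q n x / Q (n - 1) x = (r : ℂ) ∧ 0 < r ∧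
        r < (n + m) / n * (x + Real.sqrt (1 + x ^ 2 - m ^ 2 / n ^ 2))⁻¹ ∧
        (n + m) / n * (x + Real.sqrt (1 + x ^ 2 - m ^ 2 / n ^ 2))⁻¹ <
          Real.sqrt ((n + m) / (n - m)) := by
  intro n x hn hx
  have hmn : |m| < n := abs_lt.2 ⟨by linarith, hn⟩
  have hn0 : 0 < n := hm.trans hn
  have h : IsOblateLegendrePair m n (Q n) (Q (n - 1)) := fun y hy =>
    ⟨hsys1 n y hn hy, hsys2 n y hn hy⟩
  obtain ⟨r, hr, hr0, hquad⟩ := h.exists_ratio_quadratic_neg hmn (hdecay n hn)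
    (h.tendsto_zero_right hmn (hdecay n hn)) (fun y hy => hne n y hn hy) hx
  have hbound : (n + m) / n * (x + √(1 + x ^ 2 - m ^ 2 / n ^ 2))⁻¹ =
      (n + m) / (n * x + √((n * x) ^ 2 + (n - m) * (n + m))) := by
    rw [show (n * x) ^ 2 + (n - m) * (n + m) = n ^ 2 * (1 + x ^ 2 - m ^ 2 / n ^ 2) by
      field_simp; ring, Real.sqrt_mul (sq_nonneg n), Real.sqrt_sq hn0.le]
    field_simp
  rw [hbound]
  exact ⟨r, hr, hr0, lt_div_add_sqrt_of_quadratic_neg (by linarith) (by linarith) (by linarith),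
    div_add_sqrt_lt_sqrt_div (by linarith) (by positivity) (by linarith)⟩
end
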